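/- arXiv:2301.01634 — 10 statements merged into one kernel-verified Lean document; each statement's English description precedes it below -/
import Mathlib

section
/- Let n ≥ 1 and let A_0, A_1, ..., A_n be elements of a unital complex Banach algebra B, and set A(z) = z_0A_0 + z_1A_1 + ⋯ + z_nA_n for z ∈ ℂ^{n+1}. Then the set P = {z ∈ ℂ^{n+1} : A(z) is not invertible in B} contains a nonzero vector, is closed in ℂ^{n+1}, and is invariant under multiplication by nonzero complex scalars; consequently the projective spectrum p(A), the image of P \ {0} in complex projective space ℙ^n, is a nonempty compact subset of ℙ^n (equivalently, P ∩ {z : ‖z‖ = 1} is nonempty and compact). -/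
/-!
If `A i` is not invertible, `z = eᵢ` is a nonzero point of `P`. Otherwise, for `j ≠ i` the
spectrum of `(A i)⁻¹ A j` is nonempty, `B` being a nontrivial complex Banach algebra, and a
spectral value `μ` gives the point `eⱼ - μ eᵢ` of `P`. The set `P` is the preimage
of the closed set of non-units under the continuous linear map `z ↦ A(z)`, so it is a closed cone,
and a closed cone containing a nonzero point meets the unit sphere, which is compact.
-/

open Metric

theorem isUnit_smul_iff_of_ne_zero {𝕜 B : Type*} [Field 𝕜] [Ring B] [Algebra 𝕜 B] {c : 𝕜}
    (hc : c ≠ 0) (x : B) : IsUnit (c • x) ↔ IsUnit x :=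
  isUnit_smul_iff (Units.mk0 c hc) x

theorem exists_not_isUnit_sub_smul {B : Type*} [NormedRing B] [NormedAlgebra ℂ B]
    [CompleteSpace B] [Nontrivial B] {a : B} (ha : IsUnit a) (b : B) :
    ∃ μ : ℂ, ¬IsUnit (b - μ • a) := by
  obtain ⟨μ, hμ⟩ := spectrum.nonempty (↑ha.unit⁻¹ * b)
  refine ⟨μ, fun hunit => spectrum.mem_iff.mp hμ ?_⟩
  have hfactor : ↑ha.unit⁻¹ * (b - μ • a) = ↑ha.unit⁻¹ * b - algebraMap ℂ B μ := by
    rw [mul_sub, mul_smul_comm, ha.unit.inv_mul_of_eq ha.unit_spec,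
      Algebra.algebraMap_eq_smul_one]
  rw [IsUnit.sub_iff, ← hfactor]
  exact ha.unit⁻¹.isUnit.mul hunit

section Pencil

variable {ι B : Type*} [Fintype ι] [NormedRing B] [NormedAlgebra ℂ B]

noncomputable def pencil (A : ι → B) : EuclideanSpace ℂ ι →ₗ[ℂ] B :=
  Fintype.linearCombination ℂ A ∘ₗ (WithLp.linearEquiv 2 ℂ (ι → ℂ)).toLinearMap

theorem pencil_apply (A : ι → B) (z : EuclideanSpace ℂ ι) : pencil A z = ∑ i, z i • A i :=
  Fintype.linearCombination_apply ℂ A z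

theorem pencil_single [DecidableEq ι] (A : ι → B) (i : ι) (c : ℂ) :
    pencil A (EuclideanSpace.single i c) = c • A i := by
  rw [pencil_apply, Finset.sum_eq_single i (fun j _ hj => by simp [hj]) (by simp)]
  simp

theorem not_isUnit_pencil_smul (A : ι → B) {c : ℂ} (hc : c ≠ 0)
    {z : EuclideanSpace ℂ ι} (hz : ¬IsUnit (pencil A z)) : ¬IsUnit (pencil A (c • z)) := by
  rwa [map_smul, isUnit_smul_iff_of_ne_zero hc]

theorem isClosed_setOf_not_isUnit_pencil [CompleteSpace B] (A : ι → B) :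
    IsClosed {z : EuclideanSpace ℂ ι | ¬IsUnit (pencil A z)} :=
  Units.isOpen.isClosed_compl.preimage (pencil A).continuous_of_finiteDimensional

theorem exists_ne_zero_not_isUnit_pencil [CompleteSpace B] [Nontrivial B] [DecidableEq ι]
    (A : ι → B) {i j : ι} (hij : i ≠ j) :
    ∃ z : EuclideanSpace ℂ ι, z ≠ 0 ∧ ¬IsUnit (pencil A z) := by
  by_cases hA : IsUnit (A i)
  · obtain ⟨μ, hμ⟩ := exists_not_isUnit_sub_smul hA (A j)
    refine ⟨EuclideanSpace.single j 1 - EuclideanSpace.single i μ, fun h => ?_, ?_⟩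
    · simpa [hij] using congrArg (· j) h
    · rwa [map_sub, pencil_single, pencil_single, one_smul]
  · exact ⟨EuclideanSpace.single i 1, by simp, by rwa [pencil_single, one_smul]⟩

end Pencil

theorem nonempty_inter_sphere_of_smul_mem {𝕜 E : Type*} [RCLike 𝕜] [NormedAddCommGroup E]
    [NormedSpace 𝕜 E] {P : Set E} (hP : ∀ c : 𝕜, c ≠ 0 → ∀ z ∈ P, c • z ∈ P) {z : E}
    (hzP : z ∈ P) (hz : z ≠ 0) : (P ∩ sphere 0 1).Nonempty :=
  ⟨_, hP _ (by simpa using hz) z hzP, mem_sphere_zero_iff_norm.mpr (norm_smul_inv_norm hz)⟩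

/-- For elements `A₀, ..., Aₙ` (`n ≥ 1`) of a unital complex Banach algebra, the set `P` of
points `z ∈ ℂⁿ⁺¹` where the pencil `A(z) = z₀A₀ + ⋯ + zₙAₙ` is not invertible contains a
nonzero vector, is closed, and is invariant under multiplication by nonzero scalars; hence the
projective spectrum is nonempty and compact (equivalently, `P ∩ {‖z‖ = 1}` is nonempty and
compact). -/
theorem stmt2 {B : Type*} [NormedRing B] [NormedAlgebra ℂ B] [CompleteSpace B] [Nontrivial B]
    (n : ℕ) (hn : 1 ≤ n) (A : Fin (n + 1) → B)
    (P : Set (EuclideanSpace ℂ (Fin (n + 1))))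
    (hP : P = {z : EuclideanSpace ℂ (Fin (n + 1)) | ¬ IsUnit (∑ i, z i • A i)}) :
    (∃ z ∈ P, z ≠ 0) ∧ IsClosed P ∧
      (∀ c : ℂ, c ≠ 0 → ∀ z ∈ P, c • z ∈ P) ∧
      (P ∩ Metric.sphere (0 : EuclideanSpace ℂ (Fin (n + 1))) 1).Nonempty ∧
      IsCompact (P ∩ Metric.sphere (0 : EuclideanSpace ℂ (Fin (n + 1))) 1) := by
  simp_rw [← pencil_apply] at hP
  have h01 : (0 : Fin (n + 1)) ≠ 1 := by
    obtain ⟨m, rfl⟩ := Nat.exists_eq_add_of_le' hn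
    exact Fin.zero_ne_one
  obtain ⟨z, hz, hzP⟩ : ∃ z, z ≠ 0 ∧ z ∈ P := hP ▸ exists_ne_zero_not_isUnit_pencil A h01
  have hcone : ∀ c : ℂ, c ≠ 0 → ∀ w ∈ P, c • w ∈ P := by
    subst hP
    exact fun c hc _ => not_isUnit_pencil_smul A hc
  have hclosed : IsClosed P := hP ▸ isClosed_setOf_not_isUnit_pencil A
  exact ⟨⟨z, hzP, hz⟩, hclosed, hcone, nonempty_inter_sphere_of_smul_mem hcone hzP hz,
    (isCompact_sphere 0 1).inter_left hclosed⟩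
end

section
/- Let B be a commutative unital complex Banach algebra and let a_0, a_1, ..., a_n ∈ B. For z ∈ ℂ^{n+1}, the pencil A(z) = z_0a_0 + z_1a_1 + ⋯ + z_na_n is not invertible in B if and only if there exists a character φ of B (a nonzero algebra homomorphism φ : B → ℂ) with z_0φ(a_0) + z_1φ(a_1) + ⋯ + z_nφ(a_n) = 0. In other words, the projective spectrum p(A) is the union of the projective hyperplanes H_w = {z : z_0w_0 + ⋯ + z_nw_n = 0} over all w = (φ(a_0), ..., φ(a_n)) with φ a character of B. -/
/-- Gelfand–Mazur: every non-unit lies in a maximal ideal, which is the kernel of a character. -/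
theorem not_isUnit_iff_exists_algHom_apply_eq_zero {A : Type*} [NormedCommRing A]
    [NormedAlgebra ℂ A] [CompleteSpace A] {a : A} :
    ¬ IsUnit a ↔ ∃ φ : A →ₐ[ℂ] ℂ, φ a = 0 := by
  constructor
  · intro ha
    obtain ⟨f, hf⟩ := WeakDual.CharacterSpace.exists_apply_eq_zero ha
    exact ⟨WeakDual.CharacterSpace.equivAlgHom f, hf⟩
  · rintro ⟨φ, hφ⟩ hu
    exact not_isUnit_zero (hφ ▸ hu.map φ)

theorem stmt3_general {B : Type*} [NormedCommRing B] [NormedAlgebra ℂ B] [CompleteSpace B]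
    (n : ℕ) (a : Fin (n + 1) → B) (z : Fin (n + 1) → ℂ) :
    ¬ IsUnit (∑ i, z i • a i) ↔ ∃ φ : B →ₐ[ℂ] ℂ, ∑ i, z i * φ (a i) = 0 := by
  simp only [not_isUnit_iff_exists_algHom_apply_eq_zero, map_sum, map_smul, smul_eq_mul]

/-- In a commutative unital complex Banach algebra, the pencil `A(z) = z₀a₀ + ⋯ + zₙaₙ` is not
invertible iff some character `φ` satisfies `z₀φ(a₀) + ⋯ + zₙφ(aₙ) = 0`; i.e. the projective
spectrum is the union of the hyperplanes `H_{(φ(a₀),...,φ(aₙ))}` over characters `φ`. -/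
theorem stmt3 {B : Type*} [NormedCommRing B] [NormedAlgebra ℂ B] [CompleteSpace B]
    [Nontrivial B] (n : ℕ) (a : Fin (n + 1) → B) (z : Fin (n + 1) → ℂ) :
    ¬ IsUnit (∑ i, z i • a i) ↔ ∃ φ : B →ₐ[ℂ] ℂ, ∑ i, z i * φ (a i) = 0 :=
  stmt3_general n a z
end

section
/- Let A_1 and A_2 be normal k×k complex matrices (k ≥ 1) such that the homogeneous polynomial Q(z_0, z_1, z_2) = det(z_0 I_k + z_1 A_1 + z_2 A_2) is a product of k linear forms in (z_0, z_1, z_2). Then A_1 and A_2 have a common eigenvector: there exist a nonzero v ∈ ℂ^k and scalars λ, μ ∈ ℂ with A_1 v = λ v and A_2 v = μ v. -/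
/-!
Every member `s • A₁ + t • A₂` of the pencil has eigenvalues `s aⱼ + t bⱼ`, read off from the
linear factors of `Q`. Unitary triangularisation gives Schur's inequality
`∑ |λᵢ|² ≤ ∑ |Mᵢⱼ|²` for the eigenvalues `λᵢ` of a matrix `M`, with equality exactly when `M` is
normal. Both sides obey the parallelogram law along `A₁ ± z • A₂`, and equality holds at the normal
matrices `A₁` and `z • A₂`, so it holds at `A₁ + z • A₂`: the whole pencil is normal. Normality of
`A₁ + A₂` and `A₁ + i • A₂` gives `A₁ᴴ * A₂ = A₂ * A₁ᴴ`, hence `A₁ * A₂ = A₂ * A₁` by Fuglede's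
theorem, and commuting matrices share an eigenvector.
-/

open Matrix Module Polynomial Submodule

theorem LinearMap.exists_orthonormalBasis_inner_apply_eq_zero_of_lt {E : Type*}
    [NormedAddCommGroup E] [InnerProductSpace ℂ E] [FiniteDimensional ℂ E] (T : E →ₗ[ℂ] E)
    {n : ℕ} (hn : finrank ℂ E = n) :
    ∃ b : OrthonormalBasis (Fin n) ℂ E, ∀ ⦃i j⦄, j < i → inner ℂ (b i) (T (b j)) = 0 := by
  induction n generalizing E with
  | zero => exact ⟨(stdOrthonormalBasis ℂ E).reindex (finCongr hn), fun i => i.elim0⟩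
  | succ n ih =>
    have : Nontrivial E := Module.nontrivial_of_finrank_eq_succ hn
    have : Fact (finrank ℂ E = n + 1) := ⟨hn⟩
    -- The orthogonal complement of an eigenvector of the adjoint is `T`-invariant; the
    -- normalised eigenvector is placed last.
    obtain ⟨μ, hμ⟩ := Module.End.exists_eigenvalue (adjoint T)
    obtain ⟨v, hv⟩ := hμ.exists_hasEigenvector
    have hK : ∀ x ∈ (ℂ ∙ v)ᗮ, T x ∈ (ℂ ∙ v)ᗮ := by
      intro x hx
      rw [mem_orthogonal_singleton_iff_inner_right] at hx ⊢
      rw [← adjoint_inner_left, hv.apply_eq_smul, inner_smul_left, hx, mul_zero]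
    obtain ⟨b, hb⟩ := ih (T.restrict hK) (finrank_orthogonal_span_singleton hv.2)
    set u : E := (‖v‖⁻¹ : ℂ) • v
    have hu : ‖u‖ = 1 := by simp [u, norm_smul, inv_mul_cancel₀ (norm_ne_zero_iff.mpr hv.2)]
    have hu_mem : u ∈ ℂ ∙ v := smul_mem _ _ (mem_span_singleton_self v)
    have hbu : ∀ i, inner ℂ (b i : E) u = 0 := fun i => inner_left_of_mem_orthogonal hu_mem (b i).2
    have hub : ∀ i, inner ℂ u (b i : E) = 0 := fun i => inner_right_of_mem_orthogonal hu_mem (b i).2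
    let f : Fin (n + 1) → E := Fin.snoc (fun i => (b i : E)) u
    have hf : Orthonormal ℂ f := by
      rw [orthonormal_iff_ite]
      intro i j
      induction i using Fin.lastCases <;> induction j using Fin.lastCases <;>
        simp [f, hbu, hub, inner_self_eq_norm_sq_to_K, hu, Fin.castSucc_ne_last,
          (Fin.castSucc_ne_last _).symm, ← coe_inner, orthonormal_iff_ite.mp b.orthonormal]
    have hspan : ⊤ ≤ span ℂ (Set.range f) :=
      (hf.linearIndependent.span_eq_top_of_card_eq_finrank' (by simp [hn])).ge
    refine ⟨OrthonormalBasis.mk hf hspan, fun i j hij => ?_⟩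
    rw [OrthonormalBasis.coe_mk]
    induction j using Fin.lastCases with
    | last => exact absurd hij (Fin.le_last i).not_gt
    | cast j =>
      induction i using Fin.lastCases with
      | last => simpa [f] using inner_right_of_mem_orthogonal hu_mem (hK _ (b j).2)
      | cast i => simpa [f, coe_inner] using hb (Fin.castSucc_lt_castSucc_iff.mp hij)

theorem Polynomial.roots_prod_X_sub_C_univ {R ι : Type*} [CommRing R] [IsDomain R] [Fintype ι]
    (f : ι → R) : (∏ i, (X - C (f i))).roots = Finset.univ.val.map f := by
  rw [Finset.prod_eq_multiset_prod, ← roots_multiset_prod_X_sub_C (Finset.univ.val.map f),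
    Multiset.map_map]
  rfl

theorem sum_norm_sq_eq_norm_sq_iff {ι E : Type*} [Fintype ι] [DecidableEq ι]
    [NormedAddCommGroup E] (v : ι → E) (i : ι) :
    ∑ j, ‖v j‖ ^ 2 = ‖v i‖ ^ 2 ↔ ∀ j ≠ i, v j = 0 := by
  rw [← Finset.add_sum_erase _ _ (Finset.mem_univ i), add_eq_left,
    Finset.sum_eq_zero_iff_of_nonneg fun _ _ => by positivity]
  simp

theorem commute_of_isStarNormal_add {A : Type*} [CStarAlgebra A] {a b : A}
    [IsStarNormal a] [IsStarNormal b] (h₁ : IsStarNormal (a + b))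
    (hI : IsStarNormal (a + Complex.I • b)) : Commute a b := by
  have e₁ := h₁.star_comm_self.eq
  have eI := hI.star_comm_self.eq
  simp only [star_add, star_smul, Complex.star_def, Complex.conj_I, add_mul, mul_add,
    smul_mul_assoc, mul_smul_comm, smul_add, neg_smul, neg_mul, mul_neg, smul_neg, smul_smul,
    Complex.I_mul_I, neg_neg, one_smul] at e₁ eI
  have hsum : (star a * b - b * star a) + (star b * a - a * star b) = 0 := by
    linear_combination (norm := module) e₁ - star_comm_self' a - star_comm_self' b
  have hdiff : Complex.I • ((star a * b - b * star a) - (star b * a - a * star b)) = 0 := by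
    linear_combination (norm := module) eI - star_comm_self' a - star_comm_self' b
  rw [smul_eq_zero, or_iff_right Complex.I_ne_zero] at hdiff
  have hstar : Commute (star a) b := sub_eq_zero.mp <| by
    linear_combination (norm := module) (1 / 2 : ℂ) • (hsum + hdiff)
  -- Fuglede–Putnam, applied to the normal element `star a`.
  simpa using (IsStarNormal.star (x := a)).commute_star_left hstar

theorem Module.End.exists_hasEigenvector_of_commute {K V : Type*} [Field K] [IsAlgClosed K]
    [AddCommGroup V] [Module K V] [FiniteDimensional K V] [Nontrivial V] {f g : End K V}
    (h : Commute f g) : ∃ v μ ν, f.HasEigenvector μ v ∧ g.HasEigenvector ν v := by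
  obtain ⟨μ, hμ⟩ := f.exists_eigenvalue
  have hW : Set.MapsTo g (f.eigenspace μ) (f.eigenspace μ) := mapsTo_genEigenspace_of_comm h μ 1
  have : Nontrivial (f.eigenspace μ) := Submodule.nontrivial_iff_ne_bot.mpr hμ
  obtain ⟨ν, hν⟩ := Module.End.exists_eigenvalue (g.restrict hW)
  obtain ⟨w, hw⟩ := hν.exists_hasEigenvector
  have hw0 : (w : V) ≠ 0 := by simpa using hw.2
  exact ⟨w, μ, ν, ⟨w.2, hw0⟩,
    ⟨mem_eigenspace_iff.mpr (congrArg Subtype.val hw.apply_eq_smul), hw0⟩⟩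

namespace Matrix

section Frobenius

variable {m n : Type*}

noncomputable def frobeniusNormSq [Fintype m] [Fintype n] (A : Matrix m n ℂ) : ℝ :=
  ∑ i, ∑ j, ‖A i j‖ ^ 2

theorem mul_conjTranspose_apply_self [Fintype n] (A : Matrix m n ℂ) (i : m) :
    (A * Aᴴ) i i = ((∑ j, ‖A i j‖ ^ 2 : ℝ) : ℂ) := by
  simp [mul_apply, RCLike.mul_conj]

theorem conjTranspose_mul_apply_self [Fintype m] (A : Matrix m n ℂ) (j : n) :
    (Aᴴ * A) j j = ((∑ i, ‖A i j‖ ^ 2 : ℝ) : ℂ) := by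
  simpa using Aᴴ.mul_conjTranspose_apply_self j

theorem ofReal_frobeniusNormSq [Fintype m] [Fintype n] (A : Matrix m n ℂ) :
    (A.frobeniusNormSq : ℂ) = (A * Aᴴ).trace := by
  simp [frobeniusNormSq, trace, mul_conjTranspose_apply_self]

theorem frobeniusNormSq_add_add_frobeniusNormSq_sub [Fintype m] [Fintype n]
    (A B : Matrix m n ℂ) :
    (A + B).frobeniusNormSq + (A - B).frobeniusNormSq =
      2 * (A.frobeniusNormSq + B.frobeniusNormSq) := by
  simp only [frobeniusNormSq, add_apply, sub_apply, ← Finset.sum_add_distrib, Finset.mul_sum,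
    parallelogram_law_with_norm ℂ]

theorem frobeniusNormSq_unitary_conj [Fintype n] [DecidableEq n] (A : Matrix n n ℂ)
    {U : Matrix n n ℂ} (hU : U ∈ unitaryGroup n ℂ) :
    (star U * A * U).frobeniusNormSq = A.frobeniusNormSq := by
  have hUU : U * Uᴴ = 1 := mem_unitaryGroup_iff.mp hU
  apply Complex.ofReal_injective
  rw [ofReal_frobeniusNormSq, ofReal_frobeniusNormSq, star_eq_conjTranspose]
  have hconj : Uᴴ * A * U * (Uᴴ * A * U)ᴴ = Uᴴ * (A * Aᴴ) * U := by
    simp only [conjTranspose_mul, conjTranspose_conjTranspose, Matrix.mul_assoc]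
    rw [← Matrix.mul_assoc U, hUU, Matrix.one_mul]
  rw [hconj, trace_mul_cycle, hUU, Matrix.one_mul]

theorem sum_norm_sq_diag_le_frobeniusNormSq [Fintype n] (A : Matrix n n ℂ) :
    ∑ i, ‖A i i‖ ^ 2 ≤ A.frobeniusNormSq :=
  Finset.sum_le_sum fun i _ =>
    Finset.single_le_sum (f := fun j => ‖A i j‖ ^ 2) (fun _ _ => by positivity) (Finset.mem_univ i)

theorem frobeniusNormSq_eq_sum_diag_iff [Fintype n] [DecidableEq n] (A : Matrix n n ℂ) :
    A.frobeniusNormSq = ∑ i, ‖A i i‖ ^ 2 ↔ A.IsDiag := by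
  rw [frobeniusNormSq, eq_comm, Finset.sum_eq_sum_iff_of_le fun i _ =>
    Finset.single_le_sum (f := fun j => ‖A i j‖ ^ 2) (fun _ _ => by positivity) (Finset.mem_univ i)]
  simp only [Finset.mem_univ, forall_const, eq_comm (a := ‖_‖ ^ 2), sum_norm_sq_eq_norm_sq_iff]
  exact ⟨fun h i j hij => h i j hij.symm, fun h i j hji => h hji.symm⟩

end Frobenius

section Triangular

variable {n R : Type*} [Fintype n]

theorem IsDiag.isStarNormal [DecidableEq n] [CommSemiring R] [StarRing R] {A : Matrix n n R}
    (hA : A.IsDiag) : IsStarNormal A := by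
  rw [isDiag_iff_diagonal_diag] at hA
  rw [← hA]
  exact ⟨by simp [Commute, SemiconjBy, star_eq_conjTranspose, diagonal_conjTranspose, mul_comm]⟩

theorem isStarNormal_unitary_conj_iff [DecidableEq n] [CommRing R] [StarRing R]
    {A U : Matrix n n R} (hU : U ∈ unitaryGroup n R) :
    IsStarNormal (star U * A * U) ↔ IsStarNormal A := by
  let e := Unitary.conjStarAlgAut R (Matrix n n R) (star ⟨U, hU⟩)
  have he : e A = star U * A * U := Unitary.conjStarAlgAut_star_apply _ _
  rw [← he]
  exact ⟨fun _ => by simpa using IsStarNormal.map e.symm (e A), fun _ => IsStarNormal.map e A⟩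

theorem IsUpperTriangular.isDiag_of_isStarNormal [LinearOrder n] {T : Matrix n n ℂ}
    (hT : T.IsUpperTriangular) [IsStarNormal T] : T.IsDiag := by
  suffices h : ∀ i, ∀ j ≠ i, T i j = 0 from fun i j hij => h i j hij.symm
  intro i
  induction i using WellFoundedLT.induction with
  | ind i ih =>
    have hcol : ∀ j ≠ i, T j i = 0 := fun j hji =>
      (lt_or_gt_of_ne hji).elim (fun hlt => ih j hlt i hji.symm) (fun hgt => hT hgt)
    have hnormal := congrFun (congrFun (star_comm_self' T) i) i
    rw [star_eq_conjTranspose, conjTranspose_mul_apply_self, mul_conjTranspose_apply_self,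
      Complex.ofReal_inj, (sum_norm_sq_eq_norm_sq_iff (fun j => T j i) i).mpr hcol] at hnormal
    exact (sum_norm_sq_eq_norm_sq_iff (T i) i).mp hnormal.symm

theorem sum_norm_sq_diag_unitary_conj_eq [LinearOrder n] {A U : Matrix n n ℂ}
    (hU : U ∈ unitaryGroup n ℂ) (hT : (star U * A * U).IsUpperTriangular) {μ : n → ℂ}
    (hμ : A.charpoly = ∏ i, (X - C (μ i))) :
    ∑ i, ‖(star U * A * U) i i‖ ^ 2 = ∑ i, ‖μ i‖ ^ 2 := by
  have hcharpoly : (star U * A * U).charpoly = A.charpoly := by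
    rw [charpoly_mul_comm, ← Matrix.mul_assoc, mem_unitaryGroup_iff.mp hU, Matrix.one_mul]
  have hroots := congrArg roots
    ((charpoly_of_isUpperTriangular _ hT).symm.trans (hcharpoly.trans hμ))
  rw [roots_prod_X_sub_C_univ, roots_prod_X_sub_C_univ] at hroots
  have hsums := congrArg (fun s => (s.map fun z => ‖z‖ ^ 2).sum) hroots
  simp only [Multiset.map_map] at hsums
  exact hsums

end Triangular

theorem exists_unitary_isUpperTriangular {n : ℕ} (A : Matrix (Fin n) (Fin n) ℂ) :
    ∃ U ∈ unitaryGroup (Fin n) ℂ, (star U * A * U).IsUpperTriangular := by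
  obtain ⟨b, hb⟩ := (toEuclideanLin A).exists_orthonormalBasis_inner_apply_eq_zero_of_lt
    finrank_euclideanSpace_fin
  let e := EuclideanSpace.basisFun (Fin n) ℂ
  refine ⟨e.toBasis.toMatrix b.toBasis, e.toMatrix_orthonormalBasis_mem_unitary b,
    fun i j hij => ?_⟩
  rw [mul_mul_apply, ← hb hij, EuclideanSpace.inner_eq_star_dotProduct, dotProduct_comm]
  rfl

section Schur

variable {n : ℕ} {A : Matrix (Fin n) (Fin n) ℂ} {μ : Fin n → ℂ}

theorem sum_norm_sq_le_frobeniusNormSq (hμ : A.charpoly = ∏ i, (X - C (μ i))) :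
    ∑ i, ‖μ i‖ ^ 2 ≤ A.frobeniusNormSq := by
  obtain ⟨U, hU, hT⟩ := exists_unitary_isUpperTriangular A
  rw [← sum_norm_sq_diag_unitary_conj_eq hU hT hμ, ← frobeniusNormSq_unitary_conj A hU]
  exact sum_norm_sq_diag_le_frobeniusNormSq _

theorem isStarNormal_iff_frobeniusNormSq_eq (hμ : A.charpoly = ∏ i, (X - C (μ i))) :
    IsStarNormal A ↔ A.frobeniusNormSq = ∑ i, ‖μ i‖ ^ 2 := by
  obtain ⟨U, hU, hT⟩ := exists_unitary_isUpperTriangular A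
  rw [← sum_norm_sq_diag_unitary_conj_eq hU hT hμ, ← frobeniusNormSq_unitary_conj A hU,
    frobeniusNormSq_eq_sum_diag_iff, ← isStarNormal_unitary_conj_iff hU]
  exact ⟨fun _ => hT.isDiag_of_isStarNormal, IsDiag.isStarNormal⟩

theorem isStarNormal_add_of_charpoly_eq {B : Matrix (Fin n) (Fin n) ℂ} {ν : Fin n → ℂ}
    [IsStarNormal A] [IsStarNormal B]
    (hA : A.charpoly = ∏ i, (X - C (μ i))) (hB : B.charpoly = ∏ i, (X - C (ν i)))
    (hadd : (A + B).charpoly = ∏ i, (X - C (μ i + ν i)))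
    (hsub : (A - B).charpoly = ∏ i, (X - C (μ i - ν i))) :
    IsStarNormal (A + B) := by
  rw [isStarNormal_iff_frobeniusNormSq_eq hadd]
  have hfrobenius := frobeniusNormSq_add_add_frobeniusNormSq_sub A B
  rw [(isStarNormal_iff_frobeniusNormSq_eq hA).mp ‹_›,
    (isStarNormal_iff_frobeniusNormSq_eq hB).mp ‹_›] at hfrobenius
  have heigenvalues : ∑ i, ‖μ i + ν i‖ ^ 2 + ∑ i, ‖μ i - ν i‖ ^ 2 =
      2 * (∑ i, ‖μ i‖ ^ 2 + ∑ i, ‖ν i‖ ^ 2) := by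
    simp only [← Finset.sum_add_distrib, Finset.mul_sum, parallelogram_law_with_norm ℂ]
  linarith [sum_norm_sq_le_frobeniusNormSq hadd, sum_norm_sq_le_frobeniusNormSq hsub]

end Schur

theorem exists_charpoly_smul_add_smul_eq_prod {ι : Type*} [Fintype ι] [DecidableEq ι]
    {A₁ A₂ : Matrix ι ι ℂ} {w : ι → Fin 3 → ℂ}
    (hQ : ∀ z₀ z₁ z₂ : ℂ, (z₀ • (1 : Matrix ι ι ℂ) + z₁ • A₁ + z₂ • A₂).det =
      ∏ j, (w j 0 * z₀ + w j 1 * z₁ + w j 2 * z₂)) :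
    ∃ a b : ι → ℂ, ∀ s t : ℂ, (s • A₁ + t • A₂).charpoly = ∏ j, (X - C (s * a j + t * b j)) := by
  have hprod : ∏ j, w j 0 = 1 := by simpa using (hQ 1 0 0).symm
  have hw : ∀ j, w j 0 ≠ 0 := fun j h => by
    simp [Finset.prod_eq_zero (f := fun j => w j 0) (Finset.mem_univ j) h] at hprod
  refine ⟨fun j => w j 1 / w j 0, fun j => w j 2 / w j 0,
    fun s t => Polynomial.funext fun x => ?_⟩
  have hfactor : ∀ j, w j 0 * x + w j 1 * -s + w j 2 * -t =
      w j 0 * (x - (s * (w j 1 / w j 0) + t * (w j 2 / w j 0))) := fun j => by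
    field_simp [hw j]
    ring
  have hmat : scalar ι x - (s • A₁ + t • A₂) = x • (1 : Matrix ι ι ℂ) + (-s) • A₁ + (-t) • A₂ := by
    rw [scalar_apply, ← smul_one_eq_diagonal, neg_smul, neg_smul]
    abel
  rw [eval_charpoly, hmat, hQ, Finset.prod_congr rfl fun j _ => hfactor j,
    Finset.prod_mul_distrib, hprod, one_mul]
  simp [eval_prod]

end Matrix

/-- If `A₁, A₂` are normal `k×k` matrices (`k ≥ 1`) whose joint characteristic polynomial
`Q(z) = det(z₀I + z₁A₁ + z₂A₂)` is a product of `k` linear forms, then `A₁` and `A₂` have a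
common eigenvector. -/
theorem stmt5 (k : ℕ) (hk : 0 < k) (A₁ A₂ : Matrix (Fin k) (Fin k) ℂ)
    (h₁ : A₁ᴴ * A₁ = A₁ * A₁ᴴ) (h₂ : A₂ᴴ * A₂ = A₂ * A₂ᴴ)
    (w : Fin k → Fin 3 → ℂ)
    (hQ : ∀ z₀ z₁ z₂ : ℂ,
      (z₀ • (1 : Matrix (Fin k) (Fin k) ℂ) + z₁ • A₁ + z₂ • A₂).det =
        ∏ j, (w j 0 * z₀ + w j 1 * z₁ + w j 2 * z₂)) :
    ∃ (v : Fin k → ℂ) (l μ : ℂ), v ≠ 0 ∧ A₁.mulVec v = l • v ∧ A₂.mulVec v = μ • v := by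
  obtain ⟨a, b, hL⟩ := exists_charpoly_smul_add_smul_eq_prod hQ
  have : IsStarNormal A₁ := ⟨h₁⟩
  have : IsStarNormal A₂ := ⟨h₂⟩
  have hnormal (z : ℂ) : IsStarNormal (A₁ + z • A₂) :=
    isStarNormal_add_of_charpoly_eq (μ := a) (ν := fun j => z * b j)
      (by simpa using hL 1 0) (by simpa using hL 0 z) (by simpa using hL 1 z)
      (by simpa [sub_eq_add_neg] using hL 1 (-z))
  have hcomm : Commute A₁ A₂ := by
    open scoped Matrix.Norms.L2Operator in
    exact commute_of_isStarNormal_add (by simpa using hnormal 1) (hnormal Complex.I)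
  have : NeZero k := ⟨hk.ne'⟩
  obtain ⟨v, l, μ, hv₁, hv₂⟩ :=
    Module.End.exists_hasEigenvector_of_commute (hcomm.map (toLinAlgEquiv' (R := ℂ) (n := Fin k)))
  exact ⟨v, l, μ, hv₁.2, hv₁.apply_eq_smul, hv₂.apply_eq_smul⟩
end

section
/- Let D_∞ = ℤ/2 ∗ ℤ/2 be the infinite dihedral group with generators a and t (the images of the nontrivial elements of the two free factors, so a² = t² = 1), and let λ be its left regular representation on ℓ²(D_∞). Then for (z_0, z_1, z_2) ∈ ℂ³ \ {0}, the operator z_0 I + z_1 λ(a) + z_2 λ(t) is not invertible if and only if there exists x ∈ [−1, 1] ⊂ ℝ with z_0² − z_1² − z_2² − 2z_1z_2x = 0. -/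
open scoped ENNReal

/-- The infinite dihedral group `D_∞ = ℤ/2 ∗ ℤ/2`. -/
abbrev DInf : Type := Monoid.Coprod (Multiplicative (ZMod 2)) (Multiplicative (ZMod 2))

/-!
Write `A = λ(a)`, `B = λ(t)` (involutions) and `T = z₀ + z₁A + z₂B`, `T' = z₀ - z₁A - z₂B`.
Then `T` and `T'` commute and `TT' = (z₀² - z₁² - z₂²) - z₁z₂(AB + BA)`; moreover `T'` is conjugate
to `T` by the unitary `f ↦ sign · f`, where `sign : D_∞ → {±1}` is the character with
`sign a = sign t = -1`. Hence `T` is invertible iff `TT'` is. Finally `AB + BA = λ(u) + λ(u)⁻¹`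
for `u = at`, which has infinite order: this operator is self-adjoint of norm at most `2`, and for
`|q| = 1` the vectors `∑_{k ≤ N} qᵏ δ_{uᵏ}` are approximate eigenvectors for `q + q⁻¹`, so its
spectrum is exactly `[-2, 2]`.
-/

open scoped lp

section Involutions

variable {k R : Type*} [CommRing k] [Ring R] [Algebra k R] {A B : R}

lemma smul_one_add_smul_add_smul_mul_neg (hA : A * A = 1) (hB : B * B = 1) (z₀ z₁ z₂ : k) :
    (z₀ • 1 + z₁ • A + z₂ • B) * (z₀ • 1 + (-z₁) • A + (-z₂) • B) =
      (z₀ ^ 2 - z₁ ^ 2 - z₂ ^ 2) • 1 - (z₁ * z₂) • (A * B + B * A) := by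
  simp only [mul_add, add_mul, smul_mul_smul_comm, one_mul, mul_one, hA, hB, smul_add]
  match_scalars <;> ring

lemma isUnit_smul_one_add_smul_add_smul_iff (hA : A * A = 1) (hB : B * B = 1) {U : R}
    (hU : IsUnit U) (hUA : U * A = -(A * U)) (hUB : U * B = -(B * U)) (z₀ z₁ z₂ : k) :
    IsUnit (z₀ • 1 + z₁ • A + z₂ • B) ↔
      IsUnit ((z₀ ^ 2 - z₁ ^ 2 - z₂ ^ 2) • (1 : R) - (z₁ * z₂) • (A * B + B * A)) := by
  set T := z₀ • 1 + z₁ • A + z₂ • B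
  set T' := z₀ • 1 + (-z₁) • A + (-z₂) • B
  have hconj : U * T = T' * U := by
    simp only [T, T', mul_add, add_mul, mul_smul_comm, smul_mul_assoc, hUA, hUB, mul_one, one_mul]
    module
  have hcomm : Commute T T' := by
    have h := smul_one_add_smul_add_smul_mul_neg hA hB z₀ (-z₁) (-z₂)
    simp only [neg_neg, neg_sq, neg_mul_neg] at h
    exact (smul_one_add_smul_add_smul_mul_neg hA hB z₀ z₁ z₂).trans h.symm
  have hT' : IsUnit T' ↔ IsUnit T := by
    rw [← hU.mul_right_iff, ← hconj, hU.mul_left_iff]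
  rw [← smul_one_add_smul_add_smul_mul_neg hA hB, hcomm.isUnit_mul_iff, hT', and_self]

end Involutions

section ApproximateEigenvalue

variable {𝕜 E : Type*} [NontriviallyNormedField 𝕜] [NormedAddCommGroup E] [NormedSpace 𝕜 E]

lemma mem_spectrum_of_forall_exists_norm_le {M : E →L[𝕜] E} {μ : 𝕜} (B : ℝ)
    (h : ∀ n : ℕ, ∃ f : E, ‖μ • f - M f‖ ≤ B ∧ n ≤ ‖f‖) : μ ∈ spectrum 𝕜 M := by
  rintro ⟨d, hd⟩
  obtain ⟨n, hn⟩ := exists_nat_gt (‖(↑d⁻¹ : E →L[𝕜] E)‖ * B)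
  obtain ⟨f, hfB, hnf⟩ := h n
  have hf : (↑d⁻¹ : E →L[𝕜] E) (μ • f - M f) = f := by
    change ((↑d⁻¹ : E →L[𝕜] E) * (algebraMap 𝕜 _ μ - M)) f = f
    rw [← hd, Units.inv_mul]
    rfl
  have hle : ‖f‖ ≤ ‖(↑d⁻¹ : E →L[𝕜] E)‖ * B := by
    rw [← hf]
    exact (ContinuousLinearMap.le_opNorm _ _).trans (by gcongr)
  linarith

end ApproximateEigenvalue

lemma map_sum_pow_smul_sub_add_inv_smul_sum {𝕜 E F : Type*} [Field 𝕜] [AddCommGroup E] [Module 𝕜 E]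
    [FunLike F E E] [LinearMapClass F 𝕜 E E] (M : F) (e : ℤ → E)
    (hMe : ∀ k : ℤ, M (e k) = e (k + 1) + e (k - 1)) {q : 𝕜} (hq : q ≠ 0) (N : ℕ) :
    M (∑ k ∈ Finset.range (N + 1), q ^ k • e k) -
        (q + q⁻¹) • ∑ k ∈ Finset.range (N + 1), q ^ k • e k =
      q ^ N • e (N + 1) - q⁻¹ • e 0 + e (-1) - q ^ (N + 1) • e N := by
  induction N with
  | zero =>
    simp only [zero_add, Finset.range_one, Finset.sum_singleton, pow_zero, Nat.cast_zero,
      one_smul, hMe, zero_sub, pow_one]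
    module
  | succ N ih =>
    rw [Finset.sum_range_succ, map_add, map_smul, smul_add, add_sub_add_comm, ih, hMe]
    push_cast
    simp only [add_sub_cancel_right, smul_add, pow_succ]
    match_scalars <;> field_simp <;> ring

open Complex in
lemma exists_norm_eq_one_add_inv_eq {x : ℝ} (hx : x ∈ Set.Icc (-1 : ℝ) 1) :
    ∃ q : ℂ, ‖q‖ = 1 ∧ q + q⁻¹ = 2 * x := by
  refine ⟨exp (Real.arccos x * I), norm_exp_ofReal_mul_I _, ?_⟩
  rw [← exp_neg, ← neg_mul, ← two_cos, ← ofReal_cos, Real.cos_arccos hx.1 hx.2]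

lemma two_mul_mem_spectrum_of_orthonormal {E : Type*} [NormedAddCommGroup E]
    [InnerProductSpace ℂ E] {M : E →L[ℂ] E} {e : ℤ → E} (he : Orthonormal ℂ e)
    (hMe : ∀ k : ℤ, M (e k) = e (k + 1) + e (k - 1)) {x : ℝ} (hx : x ∈ Set.Icc (-1 : ℝ) 1) :
    2 * (x : ℂ) ∈ spectrum ℂ M := by
  obtain ⟨q, hq, hqx⟩ := exists_norm_eq_one_add_inv_eq hx
  have hq0 : q ≠ 0 := norm_ne_zero_iff.mp (hq.symm ▸ one_ne_zero)
  have hunit : ∀ (c : ℂ) (k : ℤ), ‖c‖ = 1 → ‖c • e k‖ = 1 := fun c k hc => by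
    rw [norm_smul, hc, he.1 k, one_mul]
  -- a Weyl sequence: `∑_{k ≤ n²} qᵏ e k` has norm `√(n² + 1)`, but its defect is four unit vectors
  refine mem_spectrum_of_forall_exists_norm_le 4 fun n =>
    ⟨∑ k ∈ Finset.range (n ^ 2 + 1), q ^ k • e k, ?_, ?_⟩
  · rw [← hqx, ← neg_sub, norm_neg, map_sum_pow_smul_sub_add_inv_smul_sum M e hMe hq0]
    have h1 := hunit (q ^ n ^ 2) (n ^ 2 + 1) (by simp [hq])
    have h2 := hunit q⁻¹ 0 (by simp [hq])
    have h3 := hunit 1 (-1) norm_one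
    have h4 := hunit (q ^ (n ^ 2 + 1)) (n ^ 2 : ℕ) (by simp [hq])
    rw [one_smul] at h3
    push_cast at h1 h4 ⊢
    linarith [norm_sub_le (q ^ n ^ 2 • e (n ^ 2 + 1) - q⁻¹ • e 0 + e (-1))
        (q ^ (n ^ 2 + 1) • e (n ^ 2)),
      norm_add_le (q ^ n ^ 2 • e (n ^ 2 + 1) - q⁻¹ • e 0) (e (-1)),
      norm_sub_le (q ^ n ^ 2 • e (n ^ 2 + 1)) (q⁻¹ • e 0)]
  · have hnorm := (he.comp _ Nat.cast_injective).orthogonalFamily.norm_sum (fun k => q ^ k)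
      (Finset.range (n ^ 2 + 1))
    simp only [hq, LinearIsometry.toSpanSingleton_apply, Function.comp_apply, norm_pow, one_pow,
      Finset.sum_const, Finset.card_range, nsmul_eq_mul, mul_one] at hnorm
    refine le_of_sq_le_sq ?_ (norm_nonneg _)
    rw [hnorm]
    push_cast
    linarith

instance lp.instNontrivial {ι : Type*} [Nonempty ι] {E : ι → Type*}
    [∀ i, NormedAddCommGroup (E i)] [∀ i, Nontrivial (E i)] {p : ℝ≥0∞} : Nontrivial (lp E p) := by
  classical
  obtain ⟨i⟩ := ‹Nonempty ι›
  obtain ⟨x, hx⟩ := exists_ne (0 : E i)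
  exact ⟨⟨lp.single p i x, 0, fun h => hx (by simpa using congr($h i))⟩⟩

section RegularRepresentation

variable {G : Type*} [Group G]

lemma norm_intCast_unit_mul (u : ℤˣ) (z : ℂ) : ‖((u : ℤ) : ℂ) * z‖ = ‖z‖ := by
  rcases Int.units_eq_one_or u with rfl | rfl <;> simp

noncomputable def signOp (ε : G →* ℤˣ) : ℓ²(G, ℂ) →L[ℂ] ℓ²(G, ℂ) :=
  LinearMap.mkContinuous
    { toFun f := ⟨fun x => ((ε x : ℤ) : ℂ) * f x,
        (lp.memℓp f).mono' fun x => (norm_intCast_unit_mul _ _).le⟩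
      map_add' f f' := by ext x; simp [mul_add]; rfl
      map_smul' c f := by ext x; simp [mul_left_comm] }
    1 fun f => by
      rw [one_mul]
      exact lp.norm_mono (by norm_num) fun x => (norm_intCast_unit_mul _ _).le

lemma signOp_apply (ε : G →* ℤˣ) (f : ℓ²(G, ℂ)) (x : G) :
    signOp ε f x = ((ε x : ℤ) : ℂ) * f x := rfl

lemma signOp_mul_self (ε : G →* ℤˣ) : signOp ε * signOp ε = 1 := by
  ext f x
  simp [signOp_apply, ← mul_assoc, ← Int.cast_mul, ← Units.val_mul]

lemma isUnit_signOp (ε : G →* ℤˣ) : IsUnit (signOp ε) :=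
  ⟨⟨_, _, signOp_mul_self ε, signOp_mul_self ε⟩, rfl⟩

def IsLeftRegularRep (lam : G → ℓ²(G, ℂ) →L[ℂ] ℓ²(G, ℂ)) : Prop :=
  ∀ (g : G) (f : ℓ²(G, ℂ)) (x : G), lam g f x = f (g⁻¹ * x)

namespace IsLeftRegularRep

variable {lam : G → ℓ²(G, ℂ) →L[ℂ] ℓ²(G, ℂ)} (hl : IsLeftRegularRep lam)
include hl

lemma map_mul (g h : G) : lam (g * h) = lam g * lam h := by
  ext f x
  simp [hl _, mul_assoc]

lemma map_one : lam 1 = 1 := by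
  ext f x
  simp [hl 1]

lemma apply_single [DecidableEq G] (g h : G) (c : ℂ) :
    lam g (lp.single 2 h c) = lp.single 2 (g * h) c := by
  ext x
  simp [hl g, lp.single_apply, Pi.single_apply, inv_mul_eq_iff_eq_mul]

lemma adjoint_eq (g : G) : ContinuousLinearMap.adjoint (lam g) = lam g⁻¹ := by
  refine ((ContinuousLinearMap.eq_adjoint_iff _ _).mpr fun f f' => ?_).symm
  rw [lp.inner_eq_tsum, lp.inner_eq_tsum, ← (Equiv.mulLeft g⁻¹).tsum_eq]
  simp [hl g, hl g⁻¹]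

lemma mem_unitary (g : G) : lam g ∈ unitary (ℓ²(G, ℂ) →L[ℂ] ℓ²(G, ℂ)) := by
  simp only [Unitary.mem_iff, ContinuousLinearMap.star_eq_adjoint, hl.adjoint_eq, ← hl.map_mul,
    inv_mul_cancel, mul_inv_cancel, hl.map_one, and_self]

lemma spectrum_add_inv_subset (g : G) :
    spectrum ℂ (lam g + lam g⁻¹) ⊆ (fun x : ℝ => 2 * (x : ℂ)) '' Set.Icc (-1) 1 := by
  intro z hz
  have hsa : IsSelfAdjoint (lam g + lam g⁻¹) := by
    simpa [ContinuousLinearMap.star_eq_adjoint, hl.adjoint_eq] using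
      IsSelfAdjoint.add_star_self (lam g)
  have hnorm : ‖z‖ ≤ 2 := (spectrum.norm_le_norm_of_mem hz).trans <| (norm_add_le _ _).trans <| by
    rw [CStarRing.norm_of_mem_unitary (hl.mem_unitary g),
      CStarRing.norm_of_mem_unitary (hl.mem_unitary g⁻¹)]
    norm_num
  have hre := abs_le.mp ((Complex.abs_re_le_norm z).trans hnorm)
  refine ⟨z.re / 2, ⟨by linarith, by linarith⟩, ?_⟩
  conv_rhs => rw [hsa.mem_spectrum_eq_re hz]
  push_cast
  ring

lemma spectrum_add_inv {g : G} (hg : ¬IsOfFinOrder g) :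
    spectrum ℂ (lam g + lam g⁻¹) = (fun x : ℝ => 2 * (x : ℂ)) '' Set.Icc (-1) 1 := by
  classical
  refine (hl.spectrum_add_inv_subset g).antisymm ?_
  rintro _ ⟨x, hx, rfl⟩
  have he : Orthonormal ℂ fun k : ℤ => (lp.single 2 (g ^ k) 1 : ℓ²(G, ℂ)) := by
    have := (default : HilbertBasis G ℂ ℓ²(G, ℂ)).orthonormal.comp _
      (injective_zpow_iff_not_isOfFinOrder.mpr hg)
    convert this with k
    exact (HilbertBasis.repr_symm_single (default : HilbertBasis G ℂ ℓ²(G, ℂ)) (g ^ k)).symm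
  refine two_mul_mem_spectrum_of_orthonormal he (fun k => ?_) hx
  rw [add_apply, hl.apply_single, hl.apply_single, ← zpow_one_add,
    ← zpow_neg_one, ← zpow_add, add_comm 1 k, neg_add_eq_sub]

lemma signOp_mul (ε : G →* ℤˣ) (g : G) :
    signOp ε * lam g = ((ε g : ℤ) : ℂ) • (lam g * signOp ε) := by
  ext f x
  simp [signOp_apply, hl g, ← mul_assoc, ← Int.cast_mul, ← Units.val_mul]

end IsLeftRegularRep

end RegularRepresentation

def involutionHom {M : Type*} [Group M] (σ : M) (hσ : σ * σ = 1) :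
    Multiplicative (ZMod 2) →* M :=
  AddMonoidHom.toMultiplicativeLeft
    (ZMod.lift 2 ⟨zmultiplesHom (Additive M) (Additive.ofMul σ), by
      simp [two_zsmul, ← ofMul_mul, hσ]⟩)

lemma involutionHom_ofAdd_one {M : Type*} [Group M] (σ : M) (hσ : σ * σ = 1) :
    involutionHom σ hσ (Multiplicative.ofAdd 1) = σ := by
  rw [involutionHom, AddMonoidHom.toMultiplicativeLeft_apply_apply, toAdd_ofAdd,
    ← Int.cast_one, ZMod.lift_coe]
  simp

namespace DInf

def a : DInf := .inl (.ofAdd 1)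

def t : DInf := .inr (.ofAdd 1)

lemma a_mul_self : a * a = 1 := by
  rw [a, ← map_mul, ← ofAdd_add, show (1 + 1 : ZMod 2) = 0 from rfl, ofAdd_zero, map_one]

lemma t_mul_self : t * t = 1 := by
  rw [t, ← map_mul, ← ofAdd_add, show (1 + 1 : ZMod 2) = 0 from rfl, ofAdd_zero, map_one]

def toDihedral : DInf →* DihedralGroup 0 :=
  Monoid.Coprod.lift (involutionHom (.sr 0) (DihedralGroup.sr_mul_self 0))
    (involutionHom (.sr 1) (DihedralGroup.sr_mul_self 1))

lemma not_isOfFinOrder_a_mul_t : ¬IsOfFinOrder (a * t) := by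
  intro h
  have hr : toDihedral (a * t) = .r 1 := by
    simp [toDihedral, a, t, involutionHom_ofAdd_one, DihedralGroup.sr_mul_sr]
  have := hr ▸ toDihedral.isOfFinOrder h
  exact orderOf_eq_zero_iff.mp DihedralGroup.orderOf_r_one this

def sign : DInf →* ℤˣ :=
  Monoid.Coprod.lift (involutionHom (-1) (by decide)) (involutionHom (-1) (by decide))

lemma sign_a : sign a = -1 := by
  simp [sign, a, involutionHom_ofAdd_one]

lemma sign_t : sign t = -1 := by
  simp [sign, t, involutionHom_ofAdd_one]

end DInf

theorem stmt7_general
    (lam : DInf → (lp (fun _ : DInf => ℂ) 2 →L[ℂ] lp (fun _ : DInf => ℂ) 2))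
    (hlam : ∀ (g : DInf) (f : lp (fun _ : DInf => ℂ) 2) (x : DInf),
      (lam g f : ∀ _ : DInf, ℂ) x = f (g⁻¹ * x))
    (a t : DInf)
    (ha : a = Monoid.Coprod.inl (Multiplicative.ofAdd (1 : ZMod 2)))
    (ht : t = Monoid.Coprod.inr (Multiplicative.ofAdd (1 : ZMod 2)))
    (z₀ z₁ z₂ : ℂ) :
    ¬ IsUnit (z₀ • (1 : lp (fun _ : DInf => ℂ) 2 →L[ℂ] lp (fun _ : DInf => ℂ) 2)
        + z₁ • lam a + z₂ • lam t) ↔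
      ∃ x : ℝ, x ∈ Set.Icc (-1 : ℝ) 1 ∧
        z₀ ^ 2 - z₁ ^ 2 - z₂ ^ 2 - 2 * z₁ * z₂ * (x : ℂ) = 0 := by
  have hl : IsLeftRegularRep lam := hlam
  obtain rfl : a = DInf.a := ha
  obtain rfl : t = DInf.t := ht
  have hA : lam DInf.a * lam DInf.a = 1 := by rw [← hl.map_mul, DInf.a_mul_self, hl.map_one]
  have hT : lam DInf.t * lam DInf.t = 1 := by rw [← hl.map_mul, DInf.t_mul_self, hl.map_one]
  have hUA : signOp DInf.sign * lam DInf.a = -(lam DInf.a * signOp DInf.sign) := by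
    simp [hl.signOp_mul, DInf.sign_a]
  have hUT : signOp DInf.sign * lam DInf.t = -(lam DInf.t * signOp DInf.sign) := by
    simp [hl.signOp_mul, DInf.sign_t]
  have hAT : lam DInf.a * lam DInf.t + lam DInf.t * lam DInf.a =
      lam (DInf.a * DInf.t) + lam (DInf.a * DInf.t)⁻¹ := by
    rw [← hl.map_mul, ← hl.map_mul, mul_inv_rev, inv_eq_of_mul_eq_one_right DInf.a_mul_self,
      inv_eq_of_mul_eq_one_right DInf.t_mul_self]
  have hσ := hl.spectrum_add_inv DInf.not_isOfFinOrder_a_mul_t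
  rw [isUnit_smul_one_add_smul_add_smul_iff hA hT (isUnit_signOp _) hUA hUT, hAT,
    ← Algebra.algebraMap_eq_smul_one, ← spectrum.mem_iff,
    spectrum.smul_eq_smul _ _ (hσ ▸ (Set.nonempty_Icc.mpr (by norm_num)).image _), hσ]
  simp only [Set.mem_smul_set, Set.exists_mem_image, smul_eq_mul]
  exact exists_congr fun x => and_congr_right fun _ =>
    ⟨fun h => by linear_combination -h, fun h => by linear_combination -h⟩

/-- For the left regular representation `λ` of the infinite dihedral group
`D_∞ = ⟨a, t | a² = t² = 1⟩` on `ℓ²(D_∞)`, the operator `z₀I + z₁λ(a) + z₂λ(t)` is not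
invertible iff `z₀² − z₁² − z₂² − 2z₁z₂x = 0` for some `x ∈ [−1, 1]`. -/
theorem stmt7
    (lam : DInf → (lp (fun _ : DInf => ℂ) 2 →L[ℂ] lp (fun _ : DInf => ℂ) 2))
    (hlam : ∀ (g : DInf) (f : lp (fun _ : DInf => ℂ) 2) (x : DInf),
      (lam g f : ∀ _ : DInf, ℂ) x = f (g⁻¹ * x))
    (a t : DInf)
    (ha : a = Monoid.Coprod.inl (Multiplicative.ofAdd (1 : ZMod 2)))
    (ht : t = Monoid.Coprod.inr (Multiplicative.ofAdd (1 : ZMod 2)))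
    (z₀ z₁ z₂ : ℂ) (hz : ¬(z₀ = 0 ∧ z₁ = 0 ∧ z₂ = 0)) :
    ¬ IsUnit (z₀ • (1 : lp (fun _ : DInf => ℂ) 2 →L[ℂ] lp (fun _ : DInf => ℂ) 2)
        + z₁ • lam a + z₂ • lam t) ↔
      ∃ x : ℝ, x ∈ Set.Icc (-1 : ℝ) 1 ∧
        z₀ ^ 2 - z₁ ^ 2 - z₂ ^ 2 - 2 * z₁ * z₂ * (x : ℂ) = 0 :=
  stmt7_general lam hlam a t ha ht z₀ z₁ z₂
end

section
/- Let G be a countable group generated by a finite set {g_1, ..., g_n}. Then the following are equivalent: (i) there exists a C_0 unitary representation π of G that almost has invariant vectors (i.e., G has the Haagerup property); (ii) there exists a C_0 unitary representation π of G such that for every nonzero z ∈ ℂ^{n+1} with z_0 + ⋯ + z_n = 0, the operator z_0 I + z_1π(g_1) + ⋯ + z_nπ(g_n) is not invertible (i.e., H_0 ⊆ p(A_π)). -/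
/-- A unitary representation of a group `G` on a complex Hilbert space. -/
structure UnitaryRep (G : Type) [Group G] where
  /-- the underlying Hilbert space -/
  space : Type
  [ngroup : NormedAddCommGroup space]
  [ips : InnerProductSpace ℂ space]
  [complete : CompleteSpace space]
  /-- the representation -/
  rep : G →* (space →L[ℂ] space)
  mem_unitary : ∀ x : G, rep x ∈ unitary (space →L[ℂ] space)

attribute [instance] UnitaryRep.ngroup UnitaryRep.ips UnitaryRep.complete

/-- A unitary representation is `C₀` if all its matrix coefficients vanish at infinity, i.e.
`{g : |⟨π(g)x, y⟩| ≥ ε}` is finite for all vectors `x, y` and all `ε > 0`. -/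
def UnitaryRep.IsC0 {G : Type} [Group G] (ρ : UnitaryRep G) : Prop :=
  ∀ (x y : ρ.space) (ε : ℝ), 0 < ε → {s : G | ε ≤ ‖(inner ℂ (ρ.rep s x) y : ℂ)‖}.Finite

/-- A unitary representation almost has invariant vectors (equivalently, it weakly contains the
trivial representation). -/
def UnitaryRep.AlmostInv {G : Type} [Group G] (ρ : UnitaryRep G) : Prop :=
  ∀ (F : Finset G) (ε : ℝ), 0 < ε → ∃ ξ : ρ.space, ‖ξ‖ = 1 ∧ ∀ s ∈ F, ‖ρ.rep s ξ - ξ‖ < ε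

/-!
Fix a unitary representation `π`. On `H₀` the pencil is `∑ zᵢ (π(gᵢ) - 1)`, which is small on
almost invariant unit vectors and hence not bounded below. Conversely, `z = (n, -1, …, -1)` gives
`T = ∑ (1 - π(gᵢ))` with `Re ⟪T x, x⟫ = ½ ∑ ‖π(gᵢ) x - x‖²`: if no unit vector is `δ`-invariant
under all generators, `T` is coercive and hence invertible. Almost invariance under the
generators spreads to any finite set, since a word of length `m` moves a vector by at most `m`
times as much.
-/

open ContinuousLinearMap (norm_map_of_mem_unitary isUnit_of_forall_le_norm_inner_map le_opNorm)

lemma ContinuousLinearMap.not_isUnit_of_forall_exists_norm_apply_lt {𝕜 E : Type*}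
    [NontriviallyNormedField 𝕜] [NormedAddCommGroup E] [NormedSpace 𝕜 E] (T : E →L[𝕜] E)
    (h : ∀ ε > 0, ∃ x : E, ‖x‖ = 1 ∧ ‖T x‖ < ε) : ¬ IsUnit T := by
  rintro ⟨u, rfl⟩
  set K := ‖(↑u⁻¹ : E →L[𝕜] E)‖
  have hK : 0 ≤ K := norm_nonneg _
  obtain ⟨x, hx, hux⟩ := h (1 / (K + 1)) (by positivity)
  have key : (1 : ℝ) < 1 := calc
    (1 : ℝ) = ‖(↑u⁻¹ : E →L[𝕜] E) ((u : E →L[𝕜] E) x)‖ := by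
      rw [← mul_apply_eq_comp, u.inv_mul, one_apply_eq_self, hx]
    _ ≤ K * ‖(u : E →L[𝕜] E) x‖ := le_opNorm _ _
    _ ≤ K * (1 / (K + 1)) := by gcongr
    _ < 1 := by rw [mul_one_div, div_lt_one (by positivity)]; linarith
  exact lt_irrefl _ key

lemma smul_add_sum_smul_eq_sum_smul_sub {k M : Type*} [CommRing k] [AddCommGroup M]
    [Module k M] {n : ℕ} (z : Fin (n + 1) → k) (hz : ∑ i, z i = 0) (e : M) (a : Fin n → M) :
    z 0 • e + ∑ i : Fin n, z i.succ • a i = ∑ i : Fin n, z i.succ • (a i - e) := by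
  have hz0 : z 0 = -∑ i : Fin n, z i.succ := by
    rw [Fin.sum_univ_succ] at hz
    exact eq_neg_of_add_eq_zero_left hz
  simp only [smul_sub, Finset.sum_sub_distrib, ← Finset.sum_smul, hz0, neg_smul]
  abel

namespace UnitaryRep

variable {G : Type} [Group G] (ρ : UnitaryRep G)

lemma norm_rep_apply (s : G) (x : ρ.space) : ‖ρ.rep s x‖ = ‖x‖ :=
  norm_map_of_mem_unitary (ρ.mem_unitary s) x

lemma re_inner_sub_rep_apply (s : G) (x : ρ.space) :
    (inner ℂ (x - ρ.rep s x) x : ℂ).re = ‖ρ.rep s x - x‖ ^ 2 / 2 := by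
  have h := norm_sub_sq (𝕜 := ℂ) (ρ.rep s x) x
  have hx := inner_self_eq_norm_sq (𝕜 := ℂ) x
  rw [ρ.norm_rep_apply] at h
  simp only [RCLike.re_to_complex] at h hx
  rw [inner_sub_left, Complex.sub_re, hx]
  linarith

lemma re_inner_sum_one_sub_rep_apply {ι : Type*} [Fintype ι] (g : ι → G) (x : ρ.space) :
    (inner ℂ ((∑ i, (1 - ρ.rep (g i))) x) x : ℂ).re = ∑ i, ‖ρ.rep (g i) x - x‖ ^ 2 / 2 := by
  simp only [sum_apply, sub_apply, one_apply_eq_self, sum_inner, Complex.re_sum,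
    re_inner_sub_rep_apply]

lemma exists_forall_norm_rep_sub_le {ι : Type*} (g : ι → G) {s : G}
    (hs : s ∈ Subgroup.closure (Set.range g)) :
    ∃ m : ℕ, ∀ (ξ : ρ.space) (δ : ℝ), (∀ i, ‖ρ.rep (g i) ξ - ξ‖ ≤ δ) →
      ‖ρ.rep s ξ - ξ‖ ≤ m * δ := by
  induction hs using Subgroup.closure_induction with
  | mem x hx =>
    obtain ⟨i, rfl⟩ := hx
    exact ⟨1, fun ξ δ h => by simpa using h i⟩
  | one => exact ⟨0, fun ξ δ _ => by simp⟩
  | mul x y _ _ hx hy =>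
    obtain ⟨mx, hmx⟩ := hx
    obtain ⟨my, hmy⟩ := hy
    refine ⟨mx + my, fun ξ δ h => ?_⟩
    have key : ρ.rep (x * y) ξ - ξ = ρ.rep x (ρ.rep y ξ - ξ) + (ρ.rep x ξ - ξ) := by
      simp only [map_mul, map_sub, mul_apply_eq_comp]
      abel
    calc ‖ρ.rep (x * y) ξ - ξ‖ ≤ ‖ρ.rep x (ρ.rep y ξ - ξ)‖ + ‖ρ.rep x ξ - ξ‖ :=
          key ▸ norm_add_le _ _
      _ = ‖ρ.rep y ξ - ξ‖ + ‖ρ.rep x ξ - ξ‖ := by rw [ρ.norm_rep_apply]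
      _ ≤ my * δ + mx * δ := add_le_add (hmy ξ δ h) (hmx ξ δ h)
      _ = (mx + my : ℕ) * δ := by push_cast; ring
  | inv x _ hx =>
    obtain ⟨mx, hmx⟩ := hx
    refine ⟨mx, fun ξ δ h => ?_⟩
    have key : ρ.rep x⁻¹ ξ - ξ = ρ.rep x⁻¹ (ξ - ρ.rep x ξ) := by
      rw [map_sub, ← mul_apply_eq_comp, ← map_mul, inv_mul_cancel, map_one, one_apply_eq_self]
    rw [key, ρ.norm_rep_apply, norm_sub_rev]
    exact hmx ξ δ h

lemma almostInv_of_closure_eq_top {ι : Type*} (g : ι → G)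
    (hgen : Subgroup.closure (Set.range g) = ⊤)
    (h : ∀ δ > 0, ∃ ξ : ρ.space, ‖ξ‖ = 1 ∧ ∀ i, ‖ρ.rep (g i) ξ - ξ‖ < δ) : ρ.AlmostInv := by
  intro F ε hε
  choose m hm using fun s : G =>
    ρ.exists_forall_norm_rep_sub_le g (hgen ▸ Subgroup.mem_top s)
  set M : ℕ := F.sup m
  obtain ⟨ξ, hξ, hξg⟩ := h (ε / (M + 1)) (by positivity)
  refine ⟨ξ, hξ, fun s hs => ?_⟩
  have hms : (m s : ℝ) ≤ M := by exact_mod_cast Finset.le_sup hs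
  calc ‖ρ.rep s ξ - ξ‖ ≤ m s * (ε / (M + 1)) := hm s ξ _ fun i => (hξg i).le
    _ ≤ M * (ε / (M + 1)) := by gcongr
    _ < (M + 1) * (ε / (M + 1)) := by gcongr; linarith
    _ = ε := by field_simp

lemma not_isUnit_sum_smul_rep_sub_one (hρ : ρ.AlmostInv) {ι : Type*} [Fintype ι]
    (g : ι → G) (w : ι → ℂ) : ¬ IsUnit (∑ i, w i • (ρ.rep (g i) - 1)) := by
  classical
  refine ContinuousLinearMap.not_isUnit_of_forall_exists_norm_apply_lt _ fun ε hε => ?_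
  set W := ∑ i, ‖w i‖
  have hW : 0 ≤ W := Finset.sum_nonneg fun i _ => norm_nonneg _
  set δ := ε / (W + 1)
  obtain ⟨ξ, hξ, hξg⟩ := hρ (Finset.univ.image g) δ (by positivity)
  refine ⟨ξ, hξ, ?_⟩
  calc ‖(∑ i, w i • (ρ.rep (g i) - 1)) ξ‖ = ‖∑ i, w i • (ρ.rep (g i) ξ - ξ)‖ := by
        simp only [sum_apply, smul_apply, sub_apply, one_apply_eq_self]
    _ ≤ ∑ i, ‖w i‖ * δ := by
        refine (norm_sum_le _ _).trans (Finset.sum_le_sum fun i _ => ?_)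
        rw [norm_smul]
        gcongr
        exact (hξg _ (Finset.mem_image_of_mem g (Finset.mem_univ i))).le
    _ = W * δ := (Finset.sum_mul ..).symm
    _ < (W + 1) * δ := by gcongr; linarith
    _ = ε := mul_div_cancel₀ ε (by positivity)

lemma exists_norm_rep_sub_lt_of_not_isUnit {ι : Type*} [Fintype ι] (g : ι → G)
    (hT : ¬ IsUnit (∑ i, (1 - ρ.rep (g i)))) {δ : ℝ} (hδ : 0 < δ) :
    ∃ ξ : ρ.space, ‖ξ‖ = 1 ∧ ∀ i, ‖ρ.rep (g i) ξ - ξ‖ < δ := by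
  by_contra! hmove
  refine hT (isUnit_of_forall_le_norm_inner_map _ (c := ⟨δ ^ 2 / 2, by positivity⟩)
    (show (0 : ℝ) < δ ^ 2 / 2 by positivity) fun x => ?_)
  rcases eq_or_ne x 0 with rfl | hx
  · simp
  have hx' : 0 < ‖x‖ := norm_pos_iff.mpr hx
  obtain ⟨i, hi⟩ := hmove ((‖x‖⁻¹ : ℂ) • x) (by simp [norm_smul, hx'.ne'])
  rw [map_smul, ← smul_sub, norm_smul, norm_inv, Complex.norm_real, Real.norm_of_nonneg hx'.le,
    le_inv_mul_iff₀ hx'] at hi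
  calc ‖x‖ ^ 2 * (δ ^ 2 / 2) = (‖x‖ * δ) ^ 2 / 2 := by ring
    _ ≤ ‖ρ.rep (g i) x - x‖ ^ 2 / 2 := by gcongr
    _ ≤ ∑ j, ‖ρ.rep (g j) x - x‖ ^ 2 / 2 :=
        Finset.single_le_sum (f := fun j => ‖ρ.rep (g j) x - x‖ ^ 2 / 2)
          (fun j _ => by positivity) (Finset.mem_univ i)
    _ = (inner ℂ ((∑ j, (1 - ρ.rep (g j))) x) x : ℂ).re :=
        (ρ.re_inner_sum_one_sub_rep_apply g x).symm
    _ ≤ ‖(inner ℂ ((∑ j, (1 - ρ.rep (g j))) x) x : ℂ)‖ := Complex.re_le_norm _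

end UnitaryRep

theorem stmt12_general {G : Type} [Group G] (n : ℕ) (hn : 0 < n) (g : Fin n → G)
    (hgen : Subgroup.closure (Set.range g) = ⊤) :
    (∃ ρ : UnitaryRep G, ρ.IsC0 ∧ ρ.AlmostInv) ↔
      (∃ ρ : UnitaryRep G, ρ.IsC0 ∧
        ∀ z : Fin (n + 1) → ℂ, z ≠ 0 → ∑ i, z i = 0 →
          ¬ IsUnit (z 0 • (1 : ρ.space →L[ℂ] ρ.space) +
            ∑ i : Fin n, z i.succ • ρ.rep (g i))) := by
  constructor
  · rintro ⟨ρ, hC0, hρ⟩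
    refine ⟨ρ, hC0, fun z _ hz => ?_⟩
    rw [smul_add_sum_smul_eq_sum_smul_sub z hz]
    exact ρ.not_isUnit_sum_smul_rep_sub_one hρ g _
  · rintro ⟨ρ, hC0, hpencil⟩
    refine ⟨ρ, hC0, ρ.almostInv_of_closure_eq_top g hgen fun δ hδ =>
      ρ.exists_norm_rep_sub_lt_of_not_isUnit g ?_ hδ⟩
    set z : Fin (n + 1) → ℂ := Fin.cons (n : ℂ) fun _ => -1
    have hz : ∑ i, z i = 0 := by simp [z, Fin.sum_cons]
    have hz₀ : z ≠ 0 := fun h => by simpa [z, hn.ne'] using congrFun h 0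
    have h := hpencil z hz₀ hz
    rw [smul_add_sum_smul_eq_sum_smul_sub z hz] at h
    simpa only [z, Fin.cons_succ, neg_one_smul, neg_sub] using h

/-- A countable group `G = ⟨g₁, ..., gₙ⟩` has the Haagerup property (some `C₀` representation
almost has invariant vectors) iff some `C₀` representation `π` satisfies
`H₀ ⊆ p(A_π)`, i.e. the pencil `z₀I + z₁π(g₁) + ⋯ + zₙπ(gₙ)` is not invertible for every
nonzero `z` with `z₀ + ⋯ + zₙ = 0`. -/
theorem stmt12 {G : Type} [Group G] [Countable G] (n : ℕ) (hn : 0 < n) (g : Fin n → G)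
    (hgen : Subgroup.closure (Set.range g) = ⊤) :
    (∃ ρ : UnitaryRep G, ρ.IsC0 ∧ ρ.AlmostInv) ↔
      (∃ ρ : UnitaryRep G, ρ.IsC0 ∧
        ∀ z : Fin (n + 1) → ℂ, z ≠ 0 → ∑ i, z i = 0 →
          ¬ IsUnit (z 0 • (1 : ρ.space →L[ℂ] ρ.space) +
            ∑ i : Fin n, z i.succ • ρ.rep (g i))) :=
  stmt12_general n hn g hgen
end

section
/- Let z_0, z_1, z_2 ∈ ℂ with z_1 ≠ 0, z_2 ≠ 0, and z_0² ≠ z_2². Set w = (z_0² − z_1² − z_2²)/(2z_1z_2) and define G_0 = 2wz_0, G_1 = z_1, G_2 = 2wz_2 + z_1. Then 2G_1G_2 = 2(z_0² − z_2²) ≠ 0 (in particular G_2 ≠ 0), and (G_0² − G_1² − G_2²)/(2G_1G_2) = 2w² − 1. In other words, the map τ(z) = (z_0² − z_1² − z_2²)/(2z_1z_2) semiconjugates the renormalization map F_π(z) = (2τ(z)z_0, z_1, 2τ(z)z_2 + z_1) to the Tchebyshev polynomial T(x) = 2x² − 1: τ(F_π(z)) = T(τ(z)). -/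
/-- The map `τ(z) = (z₀² − z₁² − z₂²)/(2z₁z₂)` semiconjugates the renormalization map
`F_π(z) = (2τ(z)z₀, z₁, 2τ(z)z₂ + z₁)` to the Tchebyshev polynomial `T(x) = 2x² − 1`. -/
theorem stmt15 (z₀ z₁ z₂ : ℂ) (h₁ : z₁ ≠ 0) (h₂ : z₂ ≠ 0) (h₀ : z₀ ^ 2 ≠ z₂ ^ 2)
    (w G₀ G₁ G₂ : ℂ)
    (hw : w = (z₀ ^ 2 - z₁ ^ 2 - z₂ ^ 2) / (2 * z₁ * z₂))
    (hG₀ : G₀ = 2 * w * z₀) (hG₁ : G₁ = z₁) (hG₂ : G₂ = 2 * w * z₂ + z₁) :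
    2 * G₁ * G₂ = 2 * (z₀ ^ 2 - z₂ ^ 2) ∧ 2 * G₁ * G₂ ≠ 0 ∧
      (G₀ ^ 2 - G₁ ^ 2 - G₂ ^ 2) / (2 * G₁ * G₂) = 2 * w ^ 2 - 1 := by
  have hkey : 2 * G₁ * G₂ = 2 * (z₀ ^ 2 - z₂ ^ 2) := by
    subst hG₁ hG₂ hw
    field_simp
    ring
  have hne : 2 * G₁ * G₂ ≠ 0 := by
    rw [hkey]
    intro h
    apply h₀
    have : z₀ ^ 2 - z₂ ^ 2 = 0 := by linear_combination h / 2
    exact sub_eq_zero.mp this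
  refine ⟨hkey, hne, ?_⟩
  rw [div_eq_iff hne, hkey]
  subst hG₀ hG₁ hG₂ hw
  field_simp
  ring
end

section
/- Define F : ℂ³ → ℂ³ by F(z_0, z_1, z_2) = (z_0(z_0² − z_1² − z_2²), z_1²z_2, z_2(z_0² − z_2²)), and let P = {z ∈ ℂ³ \ {0} : there exists x ∈ [−1, 1] ⊂ ℝ with z_0² − z_1² − z_2² = 2z_1z_2x}. Then for every z ∈ P with F(z) ≠ (0, 0, 0), we have F(z) ∈ P. (In projective terms: F maps p(A_π) \ I_1 into p(A_π), where I_1 is the indeterminacy set of F.) -/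
/-- The map `F(z₀,z₁,z₂) = (z₀(z₀²−z₁²−z₂²), z₁²z₂, z₂(z₀²−z₂²))` maps the (cone over the)
projective spectrum of `D_∞` minus the indeterminacy set of `F` into the spectrum. -/
theorem stmt16 (F : (Fin 3 → ℂ) → (Fin 3 → ℂ))
    (hF : ∀ z, F z = ![z 0 * (z 0 ^ 2 - z 1 ^ 2 - z 2 ^ 2), z 1 ^ 2 * z 2,
      z 2 * (z 0 ^ 2 - z 2 ^ 2)])
    (P : Set (Fin 3 → ℂ))
    (hP : P = {z | z ≠ 0 ∧ ∃ x : ℝ, x ∈ Set.Icc (-1 : ℝ) 1 ∧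
      z 0 ^ 2 - z 1 ^ 2 - z 2 ^ 2 = 2 * z 1 * z 2 * (x : ℂ)})
    (z : Fin 3 → ℂ) (hz : z ∈ P) (hFz : F z ≠ 0) :
    F z ∈ P := by
  subst hP
  obtain ⟨hz0, x, hx, h⟩ := hz
  refine ⟨hFz, 2 * x ^ 2 - 1, ⟨by nlinarith [hx.1, hx.2], by nlinarith [hx.1, hx.2]⟩, ?_⟩
  rw [hF]
  simp only [Matrix.cons_val_zero, Matrix.cons_val_one, Matrix.head_cons,
    Matrix.cons_val_two, Matrix.tail_cons]
  push_cast
  linear_combination ((1 : ℂ)*z 2^4 + (-2)*z 1^1*z 2^3*(x:ℂ)^1 + (1)*z 1^2*z 2^2 +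
    (-2)*z 0^2*z 2^2 + (2)*z 0^2*z 1^1*z 2^1*(x:ℂ)^1 + (-1)*z 0^2*z 1^2 + (1)*z 0^4) * h
end

section
/- Let Q(z) = z_0² − z_1² − z_2² for z ∈ ℂ³, and for z ∈ ℂ³ \ {0} say τ(z) is defined and set τ(z) = 0 if Q(z) = 0, and τ(z) = Q(z)/(2z_1z_2) if Q(z) ≠ 0 and z_1z_2 ≠ 0 (τ(z) is undefined when Q(z) ≠ 0 and z_1z_2 = 0). For z with τ(z) defined put G(z) = (2τ(z)z_0, z_1, 2τ(z)z_2 + z_1). Then: (a) for z ∈ ℂ³ \ {0} with τ(z) defined, G(z) = (0,0,0) if and only if z_1 = 0 and z_0² = z_2², i.e., if and only if z is a nonzero scalar multiple of (1, 0, 1) or (1, 0, −1); (b) there is no z ∈ ℂ³ \ {0} with τ(z) defined such that G(z) is a nonzero scalar multiple of (1, 0, 1) or of (1, 0, −1). Consequently the extended indeterminacy set of the renormalization map F_π equals its first indeterminacy set I_1(F_π) = {[1:0:1], [−1:0:1]}. -/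
/-- The extended indeterminacy set of the renormalization map `F_π` of `D_∞` equals its first
indeterminacy set `I₁(F_π) = {[1:0:1], [−1:0:1]}`: (a) at points where `τ` is defined, `F_π`
is indeterminate exactly at the nonzero multiples of `(1,0,1)` and `(1,0,−1)`, and (b) no point
where `τ` is defined is mapped onto a nonzero multiple of `(1,0,1)` or `(1,0,−1)`. -/
theorem stmt17 (Q : (Fin 3 → ℂ) → ℂ) (hQ : ∀ z, Q z = z 0 ^ 2 - z 1 ^ 2 - z 2 ^ 2)
    (τdef : (Fin 3 → ℂ) → Prop) (hτdef : ∀ z, τdef z ↔ (Q z = 0 ∨ z 1 * z 2 ≠ 0))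
    (τ : (Fin 3 → ℂ) → ℂ)
    (hτ0 : ∀ z, Q z = 0 → τ z = 0)
    (hτ1 : ∀ z, Q z ≠ 0 → z 1 * z 2 ≠ 0 → τ z = Q z / (2 * z 1 * z 2))
    (G : (Fin 3 → ℂ) → (Fin 3 → ℂ))
    (hG : ∀ z, G z = ![2 * τ z * z 0, z 1, 2 * τ z * z 2 + z 1]) :
    (∀ z : Fin 3 → ℂ, z ≠ 0 → τdef z →
      ((G z = 0 ↔ z 1 = 0 ∧ z 0 ^ 2 = z 2 ^ 2) ∧
       (G z = 0 ↔ ∃ c : ℂ, c ≠ 0 ∧ (z = c • ![1, 0, 1] ∨ z = c • ![1, 0, -1])))) ∧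
    (¬ ∃ z : Fin 3 → ℂ, z ≠ 0 ∧ τdef z ∧ ∃ c : ℂ, c ≠ 0 ∧
      (G z = c • ![1, 0, 1] ∨ G z = c • ![1, 0, -1])) := by
  constructor
  · intro z hz hdef
    have key : G z = 0 ↔ z 1 = 0 ∧ z 0 ^ 2 = z 2 ^ 2 := by
      constructor
      · intro h
        have h1 : z 1 = 0 := by
          have := congrFun h 1
          simpa [hG] using this
        have hQ0 : Q z = 0 := by
          rcases (hτdef z).1 hdef with h' | h'
          · exact h'
          · simp [h1] at h'
        have hq : z 0 ^ 2 - z 1 ^ 2 - z 2 ^ 2 = 0 := by rw [← hQ z]; exact hQ0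
        exact ⟨h1, by linear_combination hq + z 1 * h1⟩
      · rintro ⟨h1, h02⟩
        have hQ0 : Q z = 0 := by rw [hQ z]; linear_combination h02 - z 1 * h1
        have ht : τ z = 0 := hτ0 z hQ0
        funext i
        fin_cases i <;> simp [hG, ht, h1]
    refine ⟨key, key.trans ?_⟩
    constructor
    · rintro ⟨h1, h02⟩
      have : (z 0 - z 2) * (z 0 + z 2) = 0 := by linear_combination h02
      rcases mul_eq_zero.1 this with h | h
      · have he : z 0 = z 2 := by linear_combination h
        have hc : z 0 ≠ 0 := by
          intro h0
          apply hz
          funext i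
          fin_cases i <;> simp_all
        exact ⟨z 0, hc, Or.inl (by funext i; fin_cases i <;> simp [h1, ← he])⟩
      · have he : z 2 = -z 0 := by linear_combination h
        have hc : z 0 ≠ 0 := by
          intro h0
          apply hz
          funext i
          fin_cases i <;> simp_all
        exact ⟨z 0, hc, Or.inr (by funext i; fin_cases i <;> simp [h1, he, mul_comm])⟩
    · rintro ⟨c, hc, h | h⟩ <;>
      · have h0 := congrFun h 0
        have h1 := congrFun h 1
        have h2 := congrFun h 2
        simp at h0 h1 h2
        constructor
        · exact h1
        · simp [h0, h2]
  · rintro ⟨z, hz, hdef, c, hc, h | h⟩ <;>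
    · have h1 : z 1 = 0 := by
        have := congrFun h 1
        simpa [hG] using this
      have hQ0 : Q z = 0 := by
        rcases (hτdef z).1 hdef with h' | h'
        · exact h'
        · simp [h1] at h'
      have ht : τ z = 0 := hτ0 z hQ0
      have h0 := congrFun h 0
      simp [hG, ht] at h0
      exact hc h0.symm
end

section
/- Let T(x) = 2x² − 1 and let w ∈ ℂ \ [−1, 1]. Then: (a) T^k(w) ∉ [−1, 1] for every k ≥ 0 (in particular T^k(w) ≠ 0); (b) setting p_j(w) = 2^j · ∏_{k=0}^{j−1} T^k(w) for j ≥ 1, the series f(w) = Σ_{j=1}^{∞} 1/p_j(w) converges absolutely, and its sum satisfies f(w)² − 2w·f(w) + 1 = 0 with |f(w)| < 1; that is, f(w) = w − √(w² − 1) for the square-root branch making the modulus less than 1. -/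
/-!
Write `w = J(z) := (z + z⁻¹) / 2` with `0 < ‖z‖ < 1`; the Joukowski map `J` conjugates `T` to
squaring, `T (J u) = J (u²)`, so `Tᵏ(w) = J(z^(2ᵏ))`, and `J` sends the punctured open unit disc
off `[-1, 1]`. The product telescopes, `(z - z⁻¹) · p_j = u - u⁻¹` with `u = z^(2ʲ)`, which turns
the series into `(z⁻¹ - z) Σ_j y^(2ʲ) / (1 - y^(2ʲ⁺¹))` with `y = z²`. Since
`y / (1 - y²) = (1 - y)⁻¹ - (1 - y²)⁻¹`, this series telescopes to `y / (1 - y)`, so `f(w) = z`.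
-/

open Filter Finset Topology

section DyadicSeries

variable {𝕜 : Type*} [NormedField 𝕜] {x : 𝕜}

lemma div_one_sub_sq_eq_inv_sub_inv {y : 𝕜} (h : 1 - y ^ 2 ≠ 0) :
    y / (1 - y ^ 2) = (1 - y)⁻¹ - (1 - y ^ 2)⁻¹ := by
  have h1 : 1 - y ≠ 0 := fun h0 => h (by linear_combination (1 + y) * h0)
  field_simp
  ring

lemma one_sub_pow_ne_zero_of_norm_lt_one (hx : ‖x‖ < 1) {n : ℕ} (hn : n ≠ 0) : 1 - x ^ n ≠ 0 :=
  sub_ne_zero.2 fun h => (pow_lt_one₀ (norm_nonneg x) hx hn).ne (by rw [← norm_pow, ← h, norm_one])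

lemma norm_pow_two_pow_div_le (hx : ‖x‖ < 1) (j : ℕ) :
    ‖x ^ 2 ^ j / (1 - x ^ 2 ^ (j + 1))‖ ≤ ‖x‖ ^ j / (1 - ‖x‖) := by
  have hden : 1 - ‖x‖ ≤ ‖1 - x ^ 2 ^ (j + 1)‖ := by
    have := norm_sub_norm_le (1 : 𝕜) (x ^ 2 ^ (j + 1))
    rw [norm_one, norm_pow] at this
    linarith [pow_le_of_le_one (norm_nonneg x) hx.le (pow_ne_zero (j + 1) two_ne_zero)]
  rw [norm_div, norm_pow]
  exact div_le_div₀ (by positivity) (pow_le_pow_of_le_one (norm_nonneg x) hx.le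
    Nat.lt_two_pow_self.le) (by linarith) hden

lemma summable_norm_pow_two_pow_div (hx : ‖x‖ < 1) :
    Summable fun j : ℕ => ‖x ^ 2 ^ j / (1 - x ^ 2 ^ (j + 1))‖ :=
  .of_nonneg_of_le (fun _ => norm_nonneg _) (norm_pow_two_pow_div_le hx)
    ((summable_geometric_of_lt_one (norm_nonneg x) hx).div_const _)

lemma hasSum_pow_two_pow_div [CompleteSpace 𝕜] (hx : ‖x‖ < 1) :
    HasSum (fun j : ℕ => x ^ 2 ^ j / (1 - x ^ 2 ^ (j + 1))) (x / (1 - x)) := by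
  rw [(summable_norm_pow_two_pow_div hx).of_norm.hasSum_iff_tendsto_nat]
  have hpartial (n : ℕ) : ∑ j ∈ range n, x ^ 2 ^ j / (1 - x ^ 2 ^ (j + 1)) =
      (1 - x)⁻¹ - (1 - x ^ 2 ^ n)⁻¹ := by
    have htel := sum_range_sub' (fun j => (1 - x ^ 2 ^ j)⁻¹) n
    simp only [pow_zero, pow_one] at htel
    rw [← htel]
    refine sum_congr rfl fun j _ => ?_
    have h := one_sub_pow_ne_zero_of_norm_lt_one hx (pow_ne_zero (j + 1) two_ne_zero)
    rw [pow_succ, pow_mul] at h ⊢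
    exact div_one_sub_sq_eq_inv_sub_inv h
  have hpow : Tendsto (fun n : ℕ => x ^ 2 ^ n) atTop (𝓝 0) :=
    (tendsto_pow_atTop_nhds_zero_of_norm_lt_one hx).comp
      (tendsto_pow_atTop_atTop_of_one_lt one_lt_two)
  have hlim : (1 - x)⁻¹ - (1 - 0)⁻¹ = x / (1 - x) := by
    have : 1 - x ≠ 0 := by simpa using one_sub_pow_ne_zero_of_norm_lt_one hx one_ne_zero
    field_simp
    ring
  simp only [hpartial, ← hlim]
  exact tendsto_const_nhds.sub ((tendsto_const_nhds.sub hpow).inv₀ (by simp))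

end DyadicSeries

section Joukowski

variable {K : Type*} [Field K] {z : K}

def joukowski (z : K) : K := (z + z⁻¹) / 2

variable [NeZero (2 : K)]

lemma joukowski_eq_iff (hz : z ≠ 0) {w : K} : joukowski z = w ↔ z ^ 2 - 2 * w * z + 1 = 0 := by
  have h2 : (2 : K) ≠ 0 := two_ne_zero
  have hzz : z * z⁻¹ = 1 := mul_inv_cancel₀ hz
  rw [joukowski, div_eq_iff h2, ← sub_eq_zero]
  constructor <;> intro h
  · linear_combination z * h - hzz
  · linear_combination z⁻¹ * h + (2 * w - z) * hzz

lemma two_mul_joukowski_sq_sub_one (hz : z ≠ 0) :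
    2 * joukowski z ^ 2 - 1 = joukowski (z ^ 2) := by
  unfold joukowski
  field_simp
  ring

lemma iterate_joukowski (hz : z ≠ 0) (k : ℕ) :
    (fun x : K => 2 * x ^ 2 - 1)^[k] (joukowski z) = joukowski (z ^ 2 ^ k) := by
  induction k with
  | zero => simp
  | succ k ih =>
    rw [Function.iterate_succ_apply', ih, two_mul_joukowski_sq_sub_one (pow_ne_zero _ hz),
      ← pow_mul, ← pow_succ]

lemma sub_inv_mul_two_pow_mul_prod_joukowski (hz : z ≠ 0) (j : ℕ) :
    (z - z⁻¹) * (2 ^ j * ∏ k ∈ range j, joukowski (z ^ 2 ^ k)) = z ^ 2 ^ j - (z ^ 2 ^ j)⁻¹ := by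
  induction j with
  | zero => simp
  | succ j ih =>
    have hu : z ^ 2 ^ j ≠ 0 := pow_ne_zero _ hz
    rw [prod_range_succ, pow_succ (2 : ℕ), pow_mul]
    calc _ = (z - z⁻¹) * (2 ^ j * ∏ k ∈ range j, joukowski (z ^ 2 ^ k)) *
            (2 * joukowski (z ^ 2 ^ j)) := by ring
      _ = (z ^ 2 ^ j - (z ^ 2 ^ j)⁻¹) * (z ^ 2 ^ j + (z ^ 2 ^ j)⁻¹) := by
        rw [ih, joukowski]; field_simp
      _ = _ := by field_simp; ring

lemma inv_two_pow_mul_prod_joukowski (hz : z ≠ 0) (j : ℕ) (h : 1 - (z ^ 2) ^ 2 ^ (j + 1) ≠ 0) :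
    (2 ^ (j + 1) * ∏ k ∈ range (j + 1), joukowski (z ^ 2 ^ k))⁻¹ =
      (z⁻¹ - z) * ((z ^ 2) ^ 2 ^ j / (1 - (z ^ 2) ^ 2 ^ (j + 1))) := by
  have hprod := sub_inv_mul_two_pow_mul_prod_joukowski hz (j + 1)
  set u := z ^ 2 ^ (j + 1)
  have hu : u ≠ 0 := pow_ne_zero _ hz
  rw [show (z ^ 2) ^ 2 ^ (j + 1) = u ^ 2 by ring] at h ⊢
  rw [show (z ^ 2) ^ 2 ^ j = u by ring]
  refine inv_eq_of_mul_eq_one_right ?_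
  calc _ = -((z - z⁻¹) * (2 ^ (j + 1) * ∏ k ∈ range (j + 1), joukowski (z ^ 2 ^ k))) *
        (u / (1 - u ^ 2)) := by ring
    _ = 1 := by rw [hprod]; field_simp; ring

end Joukowski

lemma norm_eq_one_of_sq_sub_two_mul_add_one_eq_zero {x : ℝ} (hx : x ∈ Set.Icc (-1 : ℝ) 1)
    {u : ℂ} (h : u ^ 2 - 2 * x * u + 1 = 0) : ‖u‖ = 1 := by
  have hre := congrArg Complex.re h
  have him := congrArg Complex.im h
  simp only [sq, Complex.sub_re, Complex.sub_im, Complex.add_re, Complex.add_im,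
    Complex.mul_re, Complex.mul_im, Complex.ofReal_re, Complex.ofReal_im, Complex.one_re,
    Complex.one_im, Complex.zero_re, Complex.zero_im, Complex.re_ofNat, Complex.im_ofNat] at hre him
  -- The imaginary part gives `im u * (re u - x) = 0`. A real root forces `(re u - x)² = x² - 1 ≤ 0`,
  -- so `u = x = ±1`; otherwise `re u = x` and `im u ^ 2 = 1 - x²`.
  have hnormSq : Complex.normSq u = 1 := by
    rw [Complex.normSq_apply]
    rcases mul_eq_zero.1 (by linear_combination him / 2 : u.im * (u.re - x) = 0) with h0 | h0
    · have hsq : (u.re - x) ^ 2 = 0 := by nlinarith [hx.1, hx.2]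
      have hrx : u.re = x := by linarith [pow_eq_zero_iff two_ne_zero |>.1 hsq]
      subst hrx
      nlinarith
    · have hrx : u.re = x := by linarith
      subst hrx
      linarith
  rw [Complex.norm_def, hnormSq, Real.sqrt_one]

lemma joukowski_ne_ofReal {u : ℂ} (hu0 : u ≠ 0) (hu1 : ‖u‖ < 1) {x : ℝ}
    (hx : x ∈ Set.Icc (-1 : ℝ) 1) : (x : ℂ) ≠ joukowski u := fun h =>
  hu1.ne (norm_eq_one_of_sq_sub_two_mul_add_one_eq_zero hx ((joukowski_eq_iff hu0).1 h.symm))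

lemma joukowski_eq_re_of_norm_eq_one {z : ℂ} (hz : ‖z‖ = 1) : joukowski z = z.re := by
  rw [joukowski, Complex.inv_eq_conj hz, Complex.add_conj]
  push_cast
  ring

lemma exists_norm_le_one_joukowski_eq (w : ℂ) : ∃ z : ℂ, z ≠ 0 ∧ ‖z‖ ≤ 1 ∧ joukowski z = w := by
  obtain ⟨s, hs⟩ := IsAlgClosed.exists_pow_nat_eq (w ^ 2 - 1) two_pos
  obtain ⟨z, hz, hq⟩ : ∃ z : ℂ, ‖z‖ ≤ 1 ∧ z ^ 2 - 2 * w * z + 1 = 0 := by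
    have hnorm : ‖w - s‖ * ‖w + s‖ = 1 := by
      rw [← norm_mul, show (w - s) * (w + s) = 1 by linear_combination -hs, norm_one]
    rcases le_total ‖w - s‖ 1 with h | h
    · exact ⟨w - s, h, by linear_combination hs⟩
    · exact ⟨w + s, by nlinarith [norm_nonneg (w + s)], by linear_combination hs⟩
  have hz0 : z ≠ 0 := by rintro rfl; norm_num at hq
  exact ⟨z, hz0, hz, (joukowski_eq_iff hz0).2 hq⟩

lemma exists_norm_lt_one_joukowski_eq {w : ℂ}
    (hw : ∀ x : ℝ, x ∈ Set.Icc (-1 : ℝ) 1 → (x : ℂ) ≠ w) :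
    ∃ z : ℂ, z ≠ 0 ∧ ‖z‖ < 1 ∧ joukowski z = w := by
  obtain ⟨z, hz0, hz1, rfl⟩ := exists_norm_le_one_joukowski_eq w
  refine ⟨z, hz0, hz1.lt_of_ne fun h => hw z.re ?_ (joukowski_eq_re_of_norm_eq_one h).symm, rfl⟩
  exact abs_le.1 (h ▸ Complex.abs_re_le_norm z)

/-- For `w ∉ [−1,1]`, no iterate of the Tchebyshev polynomial `T(x) = 2x² − 1` at `w` lies in
`[−1,1]` (in particular none vanishes); the series `f(w) = Σ_{j≥1} 1/p_j(w)`, where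
`p_j(w) = 2ʲ ∏_{k<j} Tᵏ(w)`, converges absolutely, and its sum satisfies
`f(w)² − 2w·f(w) + 1 = 0` with `|f(w)| < 1`, i.e. `f(w) = w − √(w² − 1)` for the branch of
the square root making the modulus less than one. -/
theorem stmt18 (T : ℂ → ℂ) (hT : ∀ x, T x = 2 * x ^ 2 - 1)
    (w : ℂ) (hw : ∀ x : ℝ, x ∈ Set.Icc (-1 : ℝ) 1 → (x : ℂ) ≠ w)
    (p : ℕ → ℂ) (hp : ∀ j, p j = 2 ^ j * ∏ k ∈ Finset.range j, T^[k] w) :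
    (∀ k : ℕ, (∀ x : ℝ, x ∈ Set.Icc (-1 : ℝ) 1 → (x : ℂ) ≠ T^[k] w) ∧ T^[k] w ≠ 0) ∧
    Summable (fun j : ℕ => ‖(p (j + 1))⁻¹‖) ∧
    (∑' j : ℕ, (p (j + 1))⁻¹) ^ 2 - 2 * w * (∑' j : ℕ, (p (j + 1))⁻¹) + 1 = 0 ∧
    ‖∑' j : ℕ, (p (j + 1))⁻¹‖ < 1 := by
  obtain rfl : T = fun x => 2 * x ^ 2 - 1 := funext hT
  obtain ⟨z, hz0, hz1, rfl⟩ := exists_norm_lt_one_joukowski_eq hw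
  have hnorm_pow {n : ℕ} (hn : n ≠ 0) : ‖z ^ n‖ < 1 :=
    norm_pow z n ▸ pow_lt_one₀ (norm_nonneg z) hz1 hn
  have hz2 : ‖z ^ 2‖ < 1 := hnorm_pow two_ne_zero
  have hterm (j : ℕ) :
      (p (j + 1))⁻¹ = (z⁻¹ - z) * ((z ^ 2) ^ 2 ^ j / (1 - (z ^ 2) ^ 2 ^ (j + 1))) := by
    simp only [hp, iterate_joukowski hz0]
    exact inv_two_pow_mul_prod_joukowski hz0 j
      (one_sub_pow_ne_zero_of_norm_lt_one hz2 (pow_ne_zero _ two_ne_zero))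
  have hsum : HasSum (fun j => (p (j + 1))⁻¹) z := by
    have h1 : 1 - z ^ 2 ≠ 0 := one_sub_pow_ne_zero_of_norm_lt_one hz1 two_ne_zero
    have hval : (z⁻¹ - z) * (z ^ 2 / (1 - z ^ 2)) = z := by field_simp
    simpa only [← hterm, hval] using (hasSum_pow_two_pow_div hz2).mul_left (z⁻¹ - z)
  refine ⟨fun k => ?_, ?_, ?_, ?_⟩
  · rw [iterate_joukowski hz0]
    have hreal (x : ℝ) (hx : x ∈ Set.Icc (-1 : ℝ) 1) : (x : ℂ) ≠ joukowski (z ^ 2 ^ k) :=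
      joukowski_ne_ofReal (pow_ne_zero _ hz0) (hnorm_pow (pow_ne_zero k two_ne_zero)) hx
    exact ⟨hreal, fun h => hreal 0 (by norm_num) (by rw [h, Complex.ofReal_zero])⟩
  · simp only [hterm, norm_mul]
    exact (summable_norm_pow_two_pow_div hz2).mul_left _
  · rw [hsum.tsum_eq]
    exact (joukowski_eq_iff hz0).1 rfl
  · rwa [hsum.tsum_eq]
end

section
/- Let T(x) = 2x² − 1, let w ∈ ℂ \ [−1, 1] (so that T^k(w) ≠ 0 for all k ≥ 0), and for n ≥ 1 set p_n = 2^n · ∏_{k=0}^{n−1} T^k(w) and f_n = Σ_{j=1}^{n} 1/p_j. Given any z = (z_0, z_1, z_2) ∈ ℂ³, define z^{(0)} = z and z^{(k+1)} = (2T^k(w) z^{(k)}_0, z^{(k)}_1, 2T^k(w) z^{(k)}_2 + z^{(k)}_1). Then for every n ≥ 1, z^{(n)} = (p_n z_0, z_1, p_n(z_2 + z_1 f_n)). In particular, when z_1z_2 ≠ 0 and w = (z_0² − z_1² − z_2²)/(2z_1z_2), the n-th iterate of the renormalization map satisfies F_π^n([z_0 : z_1 : z_2]) = [z_0 : z_1/p_n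 : z_2 + z_1 f_n] in ℙ². -/
/-- Closed formula for the iterates of the renormalization map of `D_∞`:
`F_π^n(z) = (pₙ z₀, z₁, pₙ(z₂ + z₁ fₙ))`, where `pₙ = 2ⁿ ∏_{k<n} Tᵏ(w)` and
`fₙ = Σ_{j=1}^n 1/p_j`; in projective terms `F_π^n([z₀:z₁:z₂]) = [z₀ : z₁/pₙ : z₂ + z₁ fₙ]`. -/
theorem stmt19 (T : ℂ → ℂ) (hT : ∀ x, T x = 2 * x ^ 2 - 1)
    (w : ℂ) (hw : ∀ x : ℝ, x ∈ Set.Icc (-1 : ℝ) 1 → (x : ℂ) ≠ w)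
    (p : ℕ → ℂ) (hp : ∀ m, p m = 2 ^ m * ∏ k ∈ Finset.range m, T^[k] w)
    (f : ℕ → ℂ) (hf : ∀ m, f m = ∑ j ∈ Finset.range m, (p (j + 1))⁻¹)
    (z : ℂ × ℂ × ℂ) (Z : ℕ → ℂ × ℂ × ℂ) (hZ0 : Z 0 = z)
    (hZ : ∀ k, Z (k + 1) = (2 * T^[k] w * (Z k).1, (Z k).2.1,
      2 * T^[k] w * (Z k).2.2 + (Z k).2.1)) :
    ∀ n : ℕ, 1 ≤ n →
      Z n = (p n * z.1, z.2.1, p n * (z.2.2 + z.2.1 * f n)) ∧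
      (z.2.1 * z.2.2 ≠ 0 →
        w = (z.1 ^ 2 - z.2.1 ^ 2 - z.2.2 ^ 2) / (2 * z.2.1 * z.2.2) →
        ∃ c : ℂ, c ≠ 0 ∧ Z n = c • (z.1, z.2.1 / p n, z.2.2 + z.2.1 * f n)) := by
  -- The orbit of `w` under `T` avoids `[-1, 1]`.
  have hinv : ∀ k, ∀ r : ℝ, r ∈ Set.Icc (-1 : ℝ) 1 → (r : ℂ) ≠ T^[k] w := by
    intro k
    induction k with
    | zero => simpa using hw
    | succ k ih =>
      intro r hr heq
      rw [Function.iterate_succ_apply', hT] at heq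
      set y := T^[k] w with hy
      have hr1 : (0 : ℝ) ≤ (r + 1) / 2 := by linarith [hr.1]
      have hr2 : (r + 1) / 2 ≤ 1 := by linarith [hr.2]
      set s := Real.sqrt ((r + 1) / 2) with hs
      have hs0 : 0 ≤ s := Real.sqrt_nonneg _
      have hs1 : s ≤ 1 := Real.sqrt_le_one.mpr hr2
      have h1 : s ^ 2 = (r + 1) / 2 := Real.sq_sqrt hr1
      have hs2 : ((s : ℂ)) ^ 2 = ((r : ℂ) + 1) / 2 := by
        exact_mod_cast congrArg (fun t : ℝ => (t : ℂ)) h1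
      have hfact : ((y : ℂ) - s) * (y + s) = 0 := by
        linear_combination -heq / 2 - hs2
      rcases mul_eq_zero.1 hfact with h | h
      · exact ih s ⟨by linarith, hs1⟩ (sub_eq_zero.1 h).symm
      · refine ih (-s) ⟨by linarith, by linarith⟩ ?_
        push_cast
        linear_combination -h
  have hTk : ∀ k, T^[k] w ≠ 0 := by
    intro k h
    exact hinv k 0 ⟨by norm_num, by norm_num⟩ (by simp [h])
  have hw0 : w ≠ 0 := hTk 0
  have hpne : ∀ m, p m ≠ 0 := by
    intro m
    rw [hp]
    exact mul_ne_zero (pow_ne_zero _ two_ne_zero)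
      (Finset.prod_ne_zero_iff.2 fun k _ => hTk k)
  have hpsucc : ∀ n, p (n + 1) = 2 * T^[n] w * p n := by
    intro n
    rw [hp, hp, Finset.prod_range_succ, pow_succ]
    ring
  have hfsucc : ∀ n, f (n + 1) = f n + (p (n + 1))⁻¹ := by
    intro n
    rw [hf, hf, Finset.sum_range_succ]
  have key : ∀ n : ℕ, 1 ≤ n →
      Z n = (p n * z.1, z.2.1, p n * (z.2.2 + z.2.1 * f n)) := by
    intro n hn
    induction n, hn using Nat.le_induction with
    | base =>
      have hp1 : p 1 = 2 * w := by rw [hp]; simp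
      have hf1 : f 1 = (p 1)⁻¹ := by rw [hf]; simp
      rw [hZ 0, hZ0, Prod.mk.injEq, Prod.mk.injEq]
      refine ⟨?_, rfl, ?_⟩
      · rw [hp1]; simp
      · rw [hp1, hf1, hp1]
        simp only [Function.iterate_zero, id_eq]
        field_simp
    | succ n hn ih =>
      rw [hZ n, ih, Prod.mk.injEq, Prod.mk.injEq]
      refine ⟨?_, rfl, ?_⟩
      · simp only []
        rw [hpsucc]; ring
      · simp only []
        have hc := mul_inv_cancel₀ (hpne (n + 1))
        rw [hfsucc]
        rw [hpsucc] at hc ⊢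
        linear_combination -z.2.1 * hc
  intro n hn
  refine ⟨key n hn, fun _ _ => ⟨p n, hpne n, ?_⟩⟩
  rw [key n hn]
  have hc : p n * (z.2.1 / p n) = z.2.1 := by
    rw [← mul_div_assoc]
    exact mul_div_cancel_left₀ _ (hpne n)
  simp [Prod.ext_iff, smul_eq_mul, hc]
end
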